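/- arXiv:2008.07576 — 4 statements merged into one kernel-verified Lean document; each statement's English description precedes it below -/
import Mathlib

section
/- Let χ : ℝ → ℝ be a smooth function with 0 ≤ χ ≤ 1, χ(λ) = 1 for λ ≤ λ₀ and χ(λ) = 0 for λ ≥ 2λ₀, where 0 < λ₀ ≤ 1/2, and set χ̃ = 1 − χ. For L ≥ 1 define ψ_L(λ) = χ̃(λ) χ(λ/L) / λ for λ > 0 and ψ_L(λ) = 0 for λ ≤ 0, and let ψ̂_L(k) = ∫₀^∞ e^{−ikλ} ψ_L(λ) dλ. Then there is a constant C, independent of L and M, such that for all M > L ≥ 1 and all k ≠ 0, |ψ̂_L(k) − ψ̂_M(k)| ≤ C min( ⟨log(|k| L)⟩, (|k| L)^{−3} ). -/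
open MeasureTheory Real Set Complex

noncomputable section

/-- Japanese bracket on ℝ. -/
def japR (t : ℝ) : ℝ := Real.sqrt (1 + t ^ 2)

/-- The truncated symbol `ψ_L(λ) = χ̃(λ) χ(λ/L)/λ` for `λ > 0`, extended by `0`. -/
def psiL (χ : ℝ → ℝ) (L : ℝ) (l : ℝ) : ℝ :=
  if 0 < l then (1 - χ l) * χ (l / L) / l else 0

/-- The one-sided Fourier transform `ψ̂_L(k) = ∫₀^∞ e^{-ikλ} ψ_L(λ) dλ`. -/
def psiLhat (χ : ℝ → ℝ) (L : ℝ) (k : ℝ) : ℂ :=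
  ∫ l in Set.Ioi (0 : ℝ), Complex.exp (-(Complex.I * k * l)) * (psiL χ L l : ℂ)




/-- derivative of a function constant on `Iic t` vanishes on `Iic t`. -/
lemma deriv_zero_on_Iic (f : ℝ → ℝ) (hf : Continuous (deriv f))
    (t cst : ℝ) (h : ∀ l ≤ t, f l = cst) : ∀ l ≤ t, deriv f l = 0 := by
  have hlt : ∀ l < t, deriv f l = 0 := by
    intro l hl
    have hev : f =ᶠ[nhds l] fun _ => cst :=
      Filter.eventually_of_mem (Iio_mem_nhds hl) (fun x hx => h x (le_of_lt hx))
    rw [hev.deriv_eq, deriv_const]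
  have hEq : Set.EqOn (deriv f) (fun _ => (0:ℝ)) (Iio t) := fun x hx => hlt x hx
  have hcl := hEq.closure hf continuous_const
  rw [closure_Iio] at hcl
  exact fun l hl => hcl hl

lemma deriv_zero_on_Ici (f : ℝ → ℝ) (hf : Continuous (deriv f))
    (t cst : ℝ) (h : ∀ l, t ≤ l → f l = cst) : ∀ l, t ≤ l → deriv f l = 0 := by
  have hlt : ∀ l, t < l → deriv f l = 0 := by
    intro l hl
    have hev : f =ᶠ[nhds l] fun _ => cst :=
      Filter.eventually_of_mem (Ioi_mem_nhds hl) (fun x hx => h x (le_of_lt hx))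
    rw [hev.deriv_eq, deriv_const]
  have hEq : Set.EqOn (deriv f) (fun _ => (0:ℝ)) (Ioi t) := fun x hx => hlt x hx
  have hcl := hEq.closure hf continuous_const
  rw [closure_Ioi] at hcl
  exact fun l hl => hcl hl

lemma bounded_of_zero_outside (f : ℝ → ℝ) (hf : Continuous f) (s t : ℝ)
    (hz : ∀ l, l ∉ Icc s t → f l = 0) : ∃ A, 1 ≤ A ∧ ∀ l, |f l| ≤ A := by
  obtain ⟨C, hC⟩ := (isCompact_Icc (a := s) (b := t)).exists_bound_of_continuousOn
    hf.continuousOn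
  refine ⟨max C 1, le_max_right _ _, fun l => ?_⟩
  by_cases hl : l ∈ Icc s t
  · exact le_trans (hC l hl) (le_max_left _ _)
  · rw [hz l hl]; simpa using le_trans zero_le_one (le_max_right C 1)

/-- `d/dl (P l / l^m) = P' l / l^m - m * P l / l^(m+1)` for `l ≠ 0`, `m ≥ 1`. -/
lemma hasDerivAt_div_pow (P : ℝ → ℝ) (p' l : ℝ) (hP : HasDerivAt P p' l)
    (m : ℕ) (hm : 1 ≤ m) (hl : l ≠ 0) :
    HasDerivAt (fun x => P x / x ^ m) (p' / l ^ m - m * P l / l ^ (m+1)) l := by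
  obtain ⟨r, rfl⟩ := Nat.exists_eq_add_of_le hm
  have h := hP.div (hasDerivAt_pow (1+r) l) (pow_ne_zero _ hl)
  refine h.congr_deriv ?_
  rw [show 1 + r - 1 = r by omega]
  field_simp
  ring

/-- norm of the oscillating factor is 1. -/
lemma norm_cexp_osc (k l : ℝ) : ‖Complex.exp (-(Complex.I * k * l))‖ = 1 := by
  rw [Complex.norm_exp]
  have : (-(Complex.I * k * l)).re = 0 := by simp
  rw [this, Real.exp_zero]

/-- Integration by parts step. -/
lemma ftc_step (k a b : ℝ) (F G : ℝ → ℝ) (hab : a ≤ b)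
    (hF : ∀ x ∈ Icc a b, HasDerivAt F (G x) x)
    (hFc : ContinuousOn F (Icc a b)) (hGc : ContinuousOn G (Icc a b)) :
    ∫ l in a..b, Complex.exp (-(Complex.I * k * l)) * (G l : ℂ)
      = (Complex.I * k) * (∫ l in a..b, Complex.exp (-(Complex.I * k * l)) * (F l : ℂ))
        + Complex.exp (-(Complex.I * k * b)) * (F b : ℂ)
        - Complex.exp (-(Complex.I * k * a)) * (F a : ℂ) := by
  have hIcc : uIcc a b = Icc a b := uIcc_of_le hab
  -- derivative of the oscillating exponential
  have hexp : ∀ x : ℝ, HasDerivAt (fun l : ℝ => Complex.exp (-(Complex.I * k * l)))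
      (Complex.exp (-(Complex.I * k * x)) * (-(Complex.I * k))) x := by
    intro x
    have h1 : HasDerivAt (fun l : ℝ => ((l : ℝ) : ℂ)) (1 : ℂ) x := by
      simpa using (hasDerivAt_id x).ofReal_comp
    have h2 : HasDerivAt (fun l : ℝ => -(Complex.I * k * (l:ℂ))) (-(Complex.I * k)) x := by
      simpa using (h1.const_mul (Complex.I * k)).fun_neg
    simpa using h2.cexp
  -- derivative of the product
  have hH : ∀ x ∈ Icc a b, HasDerivAt
      (fun l : ℝ => Complex.exp (-(Complex.I * k * l)) * (F l : ℂ))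
      (Complex.exp (-(Complex.I * k * x)) * (-(Complex.I * k)) * (F x : ℂ)
        + Complex.exp (-(Complex.I * k * x)) * (G x : ℂ)) x := by
    intro x hx
    exact (hexp x).mul ((hF x hx).ofReal_comp)
  have hcexp : Continuous fun l : ℝ => Complex.exp (-(Complex.I * k * l)) := by
    fun_prop
  have hintF : IntervalIntegrable
      (fun l : ℝ => Complex.exp (-(Complex.I * k * l)) * (-(Complex.I * k)) * (F l : ℂ))
      volume a b := by
    apply ContinuousOn.intervalIntegrable
    rw [hIcc]
    exact ((hcexp.continuousOn.mul continuousOn_const).mul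
      (Complex.continuous_ofReal.comp_continuousOn hFc))
  have hintG : IntervalIntegrable
      (fun l : ℝ => Complex.exp (-(Complex.I * k * l)) * (G l : ℂ)) volume a b := by
    apply ContinuousOn.intervalIntegrable
    rw [hIcc]
    exact hcexp.continuousOn.mul (Complex.continuous_ofReal.comp_continuousOn hGc)
  have key := intervalIntegral.integral_eq_sub_of_hasDerivAt
    (f := fun l : ℝ => Complex.exp (-(Complex.I * k * l)) * (F l : ℂ))
    (f' := fun x => Complex.exp (-(Complex.I * k * x)) * (-(Complex.I * k)) * (F x : ℂ)
        + Complex.exp (-(Complex.I * k * x)) * (G x : ℂ))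
    (by rw [hIcc]; exact hH) (hintF.add hintG)
  rw [intervalIntegral.integral_add hintF hintG] at key
  have hmul : (∫ l in a..b, Complex.exp (-(Complex.I * k * l)) * (-(Complex.I * k)) * (F l : ℂ))
      = (-(Complex.I * k)) * ∫ l in a..b, Complex.exp (-(Complex.I * k * l)) * (F l : ℂ) := by
    rw [← intervalIntegral.integral_const_mul]
    congr 1; funext l; ring
  rw [hmul] at key
  linear_combination key


def Dk (χ : ℝ → ℝ) (n : ℕ) : ℝ → ℝ := deriv^[n] χ

def UU (χ : ℝ → ℝ) (i : ℕ) (l : ℝ) : ℝ :=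
  match i with
  | 0 => 1 - χ l
  | _ => -(Dk χ i l)

def VV (χ : ℝ → ℝ) (L M : ℝ) (j : ℕ) (l : ℝ) : ℝ :=
  Dk χ j (l / L) / L ^ j - Dk χ j (l / M) / M ^ j

lemma contDiff_Dk (χ : ℝ → ℝ) (hχ : ContDiff ℝ (⊤:ℕ∞) χ) (n : ℕ) :
    ContDiff ℝ (⊤:ℕ∞) (Dk χ n) := hχ.iterate_deriv n

lemma continuous_Dk (χ : ℝ → ℝ) (hχ : ContDiff ℝ (⊤:ℕ∞) χ) (n : ℕ) :
    Continuous (Dk χ n) := (contDiff_Dk χ hχ n).continuous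

lemma deriv_Dk (χ : ℝ → ℝ) (n : ℕ) : deriv (Dk χ n) = Dk χ (n + 1) := by
  unfold Dk
  exact (Function.iterate_succ_apply' deriv n χ).symm

lemma hasDerivAt_Dk (χ : ℝ → ℝ) (hχ : ContDiff ℝ (⊤:ℕ∞) χ) (n : ℕ) (l : ℝ) :
    HasDerivAt (Dk χ n) (Dk χ (n + 1) l) l := by
  rw [← deriv_Dk]
  exact (((contDiff_Dk χ hχ n).differentiable (by simp)) l).hasDerivAt

lemma hasDerivAt_UU (χ : ℝ → ℝ) (hχ : ContDiff ℝ (⊤:ℕ∞) χ) (i : ℕ) (l : ℝ) :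
    HasDerivAt (fun x => UU χ i x) (UU χ (i + 1) l) l := by
  match i with
  | 0 =>
    have h : HasDerivAt χ (Dk χ 1 l) l := by
      simpa [Dk] using hasDerivAt_Dk χ hχ 0 l
    simpa [UU] using h.const_sub 1
  | (m+1) =>
    have h := (hasDerivAt_Dk χ hχ (m+1) l).neg
    exact h

lemma hasDerivAt_VV (χ : ℝ → ℝ) (hχ : ContDiff ℝ (⊤:ℕ∞) χ) (L M : ℝ)
    (hL : L ≠ 0) (hM : M ≠ 0) (j : ℕ) (l : ℝ) :
    HasDerivAt (fun x => VV χ L M j x) (VV χ L M (j + 1) l) l := by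
  have hiL : HasDerivAt (fun x : ℝ => x / L) (1 / L) l := by
    simpa using (hasDerivAt_id l).div_const L
  have hiM : HasDerivAt (fun x : ℝ => x / M) (1 / M) l := by
    simpa using (hasDerivAt_id l).div_const M
  have hL' : HasDerivAt (fun x : ℝ => Dk χ j (x / L))
      (Dk χ (j+1) (l / L) * (1 / L)) l :=
    (hasDerivAt_Dk χ hχ j (l / L)).comp l hiL
  have hM' : HasDerivAt (fun x : ℝ => Dk χ j (x / M))
      (Dk χ (j+1) (l / M) * (1 / M)) l :=
    (hasDerivAt_Dk χ hχ j (l / M)).comp l hiM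
  have h := (hL'.div_const (L ^ j)).sub (hM'.div_const (M ^ j))
  refine h.congr_deriv ?_
  unfold VV
  field_simp
  ring

def Pf0 (χ : ℝ → ℝ) (L M : ℝ) (l : ℝ) : ℝ := UU χ 0 l * VV χ L M 0 l
def Pf1 (χ : ℝ → ℝ) (L M : ℝ) (l : ℝ) : ℝ :=
  UU χ 1 l * VV χ L M 0 l + UU χ 0 l * VV χ L M 1 l
def Pf2 (χ : ℝ → ℝ) (L M : ℝ) (l : ℝ) : ℝ :=
  UU χ 2 l * VV χ L M 0 l + 2 * (UU χ 1 l * VV χ L M 1 l) + UU χ 0 l * VV χ L M 2 l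
def Pf3 (χ : ℝ → ℝ) (L M : ℝ) (l : ℝ) : ℝ :=
  UU χ 3 l * VV χ L M 0 l + 3 * (UU χ 2 l * VV χ L M 1 l)
    + 3 * (UU χ 1 l * VV χ L M 2 l) + UU χ 0 l * VV χ L M 3 l

def Ff0 (χ : ℝ → ℝ) (L M : ℝ) (l : ℝ) : ℝ := Pf0 χ L M l / l
def Ff1 (χ : ℝ → ℝ) (L M : ℝ) (l : ℝ) : ℝ :=
  Pf1 χ L M l / l - Pf0 χ L M l / l ^ 2
def Ff2 (χ : ℝ → ℝ) (L M : ℝ) (l : ℝ) : ℝ :=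
  Pf2 χ L M l / l - 2 * Pf1 χ L M l / l ^ 2 + 2 * Pf0 χ L M l / l ^ 3
def Ff3 (χ : ℝ → ℝ) (L M : ℝ) (l : ℝ) : ℝ :=
  Pf3 χ L M l / l - 3 * Pf2 χ L M l / l ^ 2 + 6 * Pf1 χ L M l / l ^ 3
    - 6 * Pf0 χ L M l / l ^ 4

lemma hasDerivAt_Pf0 (χ : ℝ → ℝ) (hχ : ContDiff ℝ (⊤:ℕ∞) χ) (L M : ℝ)
    (hL : L ≠ 0) (hM : M ≠ 0) (l : ℝ) :
    HasDerivAt (fun x => Pf0 χ L M x) (Pf1 χ L M l) l := by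
  have h := (hasDerivAt_UU χ hχ 0 l).mul (hasDerivAt_VV χ hχ L M hL hM 0 l)
  refine h.congr_deriv ?_
  all_goals (unfold Pf1; ring)

lemma hasDerivAt_Pf1 (χ : ℝ → ℝ) (hχ : ContDiff ℝ (⊤:ℕ∞) χ) (L M : ℝ)
    (hL : L ≠ 0) (hM : M ≠ 0) (l : ℝ) :
    HasDerivAt (fun x => Pf1 χ L M x) (Pf2 χ L M l) l := by
  have h := ((hasDerivAt_UU χ hχ 1 l).mul (hasDerivAt_VV χ hχ L M hL hM 0 l)).add
    ((hasDerivAt_UU χ hχ 0 l).mul (hasDerivAt_VV χ hχ L M hL hM 1 l))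
  refine h.congr_deriv ?_
  all_goals (unfold Pf2; ring)

lemma hasDerivAt_Pf2 (χ : ℝ → ℝ) (hχ : ContDiff ℝ (⊤:ℕ∞) χ) (L M : ℝ)
    (hL : L ≠ 0) (hM : M ≠ 0) (l : ℝ) :
    HasDerivAt (fun x => Pf2 χ L M x) (Pf3 χ L M l) l := by
  have h := (((hasDerivAt_UU χ hχ 2 l).mul (hasDerivAt_VV χ hχ L M hL hM 0 l)).add
    (((hasDerivAt_UU χ hχ 1 l).mul (hasDerivAt_VV χ hχ L M hL hM 1 l)).const_mul 2)).add
    ((hasDerivAt_UU χ hχ 0 l).mul (hasDerivAt_VV χ hχ L M hL hM 2 l))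
  refine h.congr_deriv ?_
  all_goals (unfold Pf3; ring)

lemma hasDerivAt_div_pow' (P : ℝ → ℝ) (p' l : ℝ) (hP : HasDerivAt P p' l)
    (m : ℕ) (hm : 1 ≤ m) (hl : l ≠ 0) :
    HasDerivAt (fun x => P x / x ^ m) (p' / l ^ m - m * P l / l ^ (m+1)) l := by
  obtain ⟨r, rfl⟩ := Nat.exists_eq_add_of_le hm
  have h := hP.div (hasDerivAt_pow (1+r) l) (pow_ne_zero _ hl)
  refine h.congr_deriv ?_
  rw [show 1 + r - 1 = r by omega]
  field_simp
  ring

lemma hasDerivAt_Ff0 (χ : ℝ → ℝ) (hχ : ContDiff ℝ (⊤:ℕ∞) χ) (L M : ℝ)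
    (hL : L ≠ 0) (hM : M ≠ 0) (l : ℝ) (hl : l ≠ 0) :
    HasDerivAt (fun x => Ff0 χ L M x) (Ff1 χ L M l) l := by
  have h0 : HasDerivAt (fun x => Pf0 χ L M x / x ^ 1)
      (Pf1 χ L M l / l ^ 1 - (1:ℕ) * Pf0 χ L M l / l ^ 2) l :=
    hasDerivAt_div_pow' _ _ _ (hasDerivAt_Pf0 χ hχ L M hL hM l) 1 le_rfl hl
  have heq : (fun x => Pf0 χ L M x / x ^ 1) = fun x => Ff0 χ L M x := by
    funext x; simp [Ff0]
  rw [heq] at h0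
  convert h0 using 1
  unfold Ff1; push_cast; ring_nf

lemma hasDerivAt_Ff1 (χ : ℝ → ℝ) (hχ : ContDiff ℝ (⊤:ℕ∞) χ) (L M : ℝ)
    (hL : L ≠ 0) (hM : M ≠ 0) (l : ℝ) (hl : l ≠ 0) :
    HasDerivAt (fun x => Ff1 χ L M x) (Ff2 χ L M l) l := by
  have h1 : HasDerivAt (fun x => Pf1 χ L M x / x ^ 1)
      (Pf2 χ L M l / l ^ 1 - (1:ℕ) * Pf1 χ L M l / l ^ 2) l :=
    hasDerivAt_div_pow' _ _ _ (hasDerivAt_Pf1 χ hχ L M hL hM l) 1 le_rfl hl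
  have h0 : HasDerivAt (fun x => Pf0 χ L M x / x ^ 2)
      (Pf1 χ L M l / l ^ 2 - (2:ℕ) * Pf0 χ L M l / l ^ 3) l :=
    hasDerivAt_div_pow' _ _ _ (hasDerivAt_Pf0 χ hχ L M hL hM l) 2 (by norm_num) hl
  have h := h1.fun_sub h0
  have heq : (fun x => Pf1 χ L M x / x ^ 1 - Pf0 χ L M x / x ^ 2)
      = fun x => Ff1 χ L M x := by
    funext x; simp [Ff1]
  rw [heq] at h
  refine h.congr_deriv ?_
  unfold Ff2; push_cast; ring_nf

lemma hasDerivAt_Ff2 (χ : ℝ → ℝ) (hχ : ContDiff ℝ (⊤:ℕ∞) χ) (L M : ℝ)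
    (hL : L ≠ 0) (hM : M ≠ 0) (l : ℝ) (hl : l ≠ 0) :
    HasDerivAt (fun x => Ff2 χ L M x) (Ff3 χ L M l) l := by
  have h2 : HasDerivAt (fun x => Pf2 χ L M x / x ^ 1)
      (Pf3 χ L M l / l ^ 1 - (1:ℕ) * Pf2 χ L M l / l ^ 2) l :=
    hasDerivAt_div_pow' _ _ _ (hasDerivAt_Pf2 χ hχ L M hL hM l) 1 le_rfl hl
  have h1 : HasDerivAt (fun x => Pf1 χ L M x / x ^ 2)
      (Pf2 χ L M l / l ^ 2 - (2:ℕ) * Pf1 χ L M l / l ^ 3) l :=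
    hasDerivAt_div_pow' _ _ _ (hasDerivAt_Pf1 χ hχ L M hL hM l) 2 (by norm_num) hl
  have h0 : HasDerivAt (fun x => Pf0 χ L M x / x ^ 3)
      (Pf1 χ L M l / l ^ 3 - (3:ℕ) * Pf0 χ L M l / l ^ 4) l :=
    hasDerivAt_div_pow' _ _ _ (hasDerivAt_Pf0 χ hχ L M hL hM l) 3 (by norm_num) hl
  have h := (h2.fun_sub (h1.const_mul 2)).fun_add (h0.const_mul 2)
  have heq : (fun x => Pf2 χ L M x / x ^ 1 - 2 * (Pf1 χ L M x / x ^ 2)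
      + 2 * (Pf0 χ L M x / x ^ 3)) = fun x => Ff2 χ L M x := by
    funext x; simp only [Ff2, pow_one]; ring
  rw [heq] at h
  refine h.congr_deriv ?_
  unfold Ff3; push_cast; ring_nf

-- continuity
lemma continuous_UU (χ : ℝ → ℝ) (hχ : ContDiff ℝ (⊤:ℕ∞) χ) (i : ℕ) :
    Continuous (fun l => UU χ i l) := by
  match i with
  | 0 =>
    have : Continuous χ := hχ.continuous
    exact continuous_const.sub this
  | (m+1) => exact (continuous_Dk χ hχ (m+1)).neg

lemma continuous_VV (χ : ℝ → ℝ) (hχ : ContDiff ℝ (⊤:ℕ∞) χ) (L M : ℝ) (j : ℕ) :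
    Continuous (fun l => VV χ L M j l) := by
  unfold VV
  exact (((continuous_Dk χ hχ j).comp (continuous_id.div_const L)).div_const _).sub
    (((continuous_Dk χ hχ j).comp (continuous_id.div_const M)).div_const _)

lemma continuous_Pf0 (χ : ℝ → ℝ) (hχ : ContDiff ℝ (⊤:ℕ∞) χ) (L M : ℝ) :
    Continuous (fun l => Pf0 χ L M l) :=
  (continuous_UU χ hχ 0).mul (continuous_VV χ hχ L M 0)

lemma continuous_Pf1 (χ : ℝ → ℝ) (hχ : ContDiff ℝ (⊤:ℕ∞) χ) (L M : ℝ) :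
    Continuous (fun l => Pf1 χ L M l) :=
  ((continuous_UU χ hχ 1).mul (continuous_VV χ hχ L M 0)).add
    ((continuous_UU χ hχ 0).mul (continuous_VV χ hχ L M 1))

lemma continuous_Pf2 (χ : ℝ → ℝ) (hχ : ContDiff ℝ (⊤:ℕ∞) χ) (L M : ℝ) :
    Continuous (fun l => Pf2 χ L M l) := by
  unfold Pf2
  exact (((continuous_UU χ hχ 2).mul (continuous_VV χ hχ L M 0)).add
    (continuous_const.mul ((continuous_UU χ hχ 1).mul (continuous_VV χ hχ L M 1)))).add
    ((continuous_UU χ hχ 0).mul (continuous_VV χ hχ L M 2))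

lemma continuous_Pf3 (χ : ℝ → ℝ) (hχ : ContDiff ℝ (⊤:ℕ∞) χ) (L M : ℝ) :
    Continuous (fun l => Pf3 χ L M l) := by
  unfold Pf3
  exact ((((continuous_UU χ hχ 3).mul (continuous_VV χ hχ L M 0)).add
    (continuous_const.mul ((continuous_UU χ hχ 2).mul (continuous_VV χ hχ L M 1)))).add
    (continuous_const.mul ((continuous_UU χ hχ 1).mul (continuous_VV χ hχ L M 2)))).add
    ((continuous_UU χ hχ 0).mul (continuous_VV χ hχ L M 3))

lemma continuousOn_Ff0 (χ : ℝ → ℝ) (hχ : ContDiff ℝ (⊤:ℕ∞) χ) (L M : ℝ) :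
    ContinuousOn (fun l => Ff0 χ L M l) {l : ℝ | l ≠ 0} := by
  unfold Ff0
  exact (continuous_Pf0 χ hχ L M).continuousOn.div continuous_id.continuousOn
    (fun x hx => hx)

lemma continuousOn_Ff1 (χ : ℝ → ℝ) (hχ : ContDiff ℝ (⊤:ℕ∞) χ) (L M : ℝ) :
    ContinuousOn (fun l => Ff1 χ L M l) {l : ℝ | l ≠ 0} := by
  unfold Ff1
  exact ((continuous_Pf1 χ hχ L M).continuousOn.div continuous_id.continuousOn
      (fun x hx => hx)).sub
    ((continuous_Pf0 χ hχ L M).continuousOn.div (continuous_pow 2).continuousOn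
      (fun x hx => pow_ne_zero 2 hx))

lemma continuousOn_Ff3 (χ : ℝ → ℝ) (hχ : ContDiff ℝ (⊤:ℕ∞) χ) (L M : ℝ) :
    ContinuousOn (fun l => Ff3 χ L M l) {l : ℝ | l ≠ 0} := by
  unfold Ff3
  exact ((((continuous_Pf3 χ hχ L M).continuousOn.div continuous_id.continuousOn
      (fun x hx => hx)).sub
    ((continuous_const.mul (continuous_Pf2 χ hχ L M)).continuousOn.div
      (continuous_pow 2).continuousOn (fun x hx => pow_ne_zero 2 hx))).add
    ((continuous_const.mul (continuous_Pf1 χ hχ L M)).continuousOn.div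
      (continuous_pow 3).continuousOn (fun x hx => pow_ne_zero 3 hx))).sub
    ((continuous_const.mul (continuous_Pf0 χ hχ L M)).continuousOn.div
      (continuous_pow 4).continuousOn (fun x hx => pow_ne_zero 4 hx))

lemma continuousOn_Ff2 (χ : ℝ → ℝ) (hχ : ContDiff ℝ (⊤:ℕ∞) χ) (L M : ℝ) :
    ContinuousOn (fun l => Ff2 χ L M l) {l : ℝ | l ≠ 0} := by
  unfold Ff2
  exact (((continuous_Pf2 χ hχ L M).continuousOn.div continuous_id.continuousOn
      (fun x hx => hx)).sub
    ((continuous_const.mul (continuous_Pf1 χ hχ L M)).continuousOn.div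
      (continuous_pow 2).continuousOn (fun x hx => pow_ne_zero 2 hx))).add
    ((continuous_const.mul (continuous_Pf0 χ hχ L M)).continuousOn.div
      (continuous_pow 3).continuousOn (fun x hx => pow_ne_zero 3 hx))

section Bounds
variable {lam0 : ℝ} {χ : ℝ → ℝ} {A L M : ℝ}

/-- Bound on `UU`. -/
lemma abs_UU_le (hlam0 : 0 < lam0) (hlam0' : lam0 ≤ 1/2)
    (hχ0 : ∀ l : ℝ, 0 ≤ χ l) (hχ1 : ∀ l : ℝ, χ l ≤ 1) (hA1 : 1 ≤ A)
    (hAb : ∀ n : ℕ, 1 ≤ n → n ≤ 3 → ∀ l : ℝ, |Dk χ n l| ≤ A)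
    (hDz : ∀ n : ℕ, 1 ≤ n → n ≤ 3 → ∀ l : ℝ, (l ≤ lam0 ∨ 2*lam0 ≤ l) → Dk χ n l = 0)
    (i : ℕ) (hi1 : 1 ≤ i) (hi : i ≤ 3) (l : ℝ) (hl : 0 < l) :
    |UU χ i l| ≤ A / l ^ i := by
  have hUU : UU χ i l = -(Dk χ i l) := by
    match i, hi1 with
    | (m+1), _ => rfl
  rw [hUU, abs_neg]
  rcases le_or_gt l 1 with h1 | h1
  · have hpow : l ^ i ≤ 1 := pow_le_one₀ hl.le h1
    have : A ≤ A / l ^ i := by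
      rw [le_div_iff₀ (pow_pos hl i)]
      nlinarith [hAb i hi1 hi l, abs_nonneg (Dk χ i l)]
    exact le_trans (hAb i hi1 hi l) this
  · have : Dk χ i l = 0 := hDz i hi1 hi l (Or.inr (by linarith))
    rw [this]
    simp only [abs_zero]
    positivity

lemma abs_UU0_le (hχ0 : ∀ l : ℝ, 0 ≤ χ l) (hχ1 : ∀ l : ℝ, χ l ≤ 1) (l : ℝ) :
    |UU χ 0 l| ≤ 1 := by
  have h0 := hχ0 l; have h1 := hχ1 l
  rw [show UU χ 0 l = 1 - χ l from rfl, abs_le]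
  constructor <;> linarith

lemma abs_VV0_le (hχ0 : ∀ l : ℝ, 0 ≤ χ l) (hχ1 : ∀ l : ℝ, χ l ≤ 1) (l : ℝ) :
    |VV χ L M 0 l| ≤ 1 := by
  have : VV χ L M 0 l = χ (l/L) - χ (l/M) := by simp [VV, Dk]
  rw [this, abs_le]
  have := hχ0 (l/L); have := hχ1 (l/L); have := hχ0 (l/M); have := hχ1 (l/M)
  constructor <;> linarith

lemma abs_VV_le (hlam0 : 0 < lam0) (hlam0' : lam0 ≤ 1/2)
    (hχ0 : ∀ l : ℝ, 0 ≤ χ l) (hχ1 : ∀ l : ℝ, χ l ≤ 1) (hA1 : 1 ≤ A)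
    (hAb : ∀ n : ℕ, 1 ≤ n → n ≤ 3 → ∀ l : ℝ, |Dk χ n l| ≤ A)
    (hDz : ∀ n : ℕ, 1 ≤ n → n ≤ 3 → ∀ l : ℝ, (l ≤ lam0 ∨ 2*lam0 ≤ l) → Dk χ n l = 0)
    (hL : 1 ≤ L) (hM : 1 ≤ M)
    (j : ℕ) (hj1 : 1 ≤ j) (hj : j ≤ 3) (l : ℝ) (hl : 0 < l) :
    |VV χ L M j l| ≤ 2 * A / l ^ j := by
  have hL0 : (0:ℝ) < L := lt_of_lt_of_le one_pos hL
  have hM0 : (0:ℝ) < M := lt_of_lt_of_le one_pos hM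
  have key : ∀ N : ℝ, 0 < N → |Dk χ j (l / N) / N ^ j| ≤ A / l ^ j := by
    intro N hN
    rcases le_or_gt l N with h1 | h1
    · rw [abs_div, _root_.abs_of_nonneg (pow_nonneg hN.le j)]
      have h2 : l ^ j ≤ N ^ j := pow_le_pow_left₀ hl.le h1 j
      exact div_le_div₀ (by linarith) (hAb j hj1 hj (l / N)) (pow_pos hl j) h2
    · have : Dk χ j (l / N) = 0 := by
        apply hDz j hj1 hj _ (Or.inr ?_)
        have : (1:ℝ) < l / N := (one_lt_div hN).mpr h1
        linarith
      rw [this]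
      simp only [zero_div, abs_zero]
      positivity
  have hsum := abs_sub (Dk χ j (l / L) / L ^ j) (Dk χ j (l / M) / M ^ j)
  calc |VV χ L M j l| ≤ |Dk χ j (l / L) / L ^ j| + |Dk χ j (l / M) / M ^ j| :=
        abs_sub _ _
    _ ≤ A / l ^ j + A / l ^ j := add_le_add (key L hL0) (key M hM0)
    _ = 2 * A / l ^ j := by ring

lemma abs_Pf0_le (hχ0 : ∀ l : ℝ, 0 ≤ χ l) (hχ1 : ∀ l : ℝ, χ l ≤ 1) (l : ℝ) :
    |Pf0 χ L M l| ≤ 1 := by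
  unfold Pf0
  rw [abs_mul]
  exact mul_le_one₀ (abs_UU0_le hχ0 hχ1 l) (abs_nonneg _) (abs_VV0_le hχ0 hχ1 l)

lemma abs_Ff0_le (hχ0 : ∀ l : ℝ, 0 ≤ χ l) (hχ1 : ∀ l : ℝ, χ l ≤ 1)
    (l : ℝ) (hl : 0 < l) : |Ff0 χ L M l| ≤ l⁻¹ := by
  unfold Ff0
  rw [abs_div, _root_.abs_of_pos hl]
  rw [div_le_iff₀ hl, inv_mul_cancel₀ (ne_of_gt hl)]
  exact abs_Pf0_le hχ0 hχ1 l

lemma abs_Pf1_le (hlam0 : 0 < lam0) (hlam0' : lam0 ≤ 1/2)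
    (hχ0 : ∀ l : ℝ, 0 ≤ χ l) (hχ1 : ∀ l : ℝ, χ l ≤ 1) (hA1 : 1 ≤ A)
    (hAb : ∀ n : ℕ, 1 ≤ n → n ≤ 3 → ∀ l : ℝ, |Dk χ n l| ≤ A)
    (hDz : ∀ n : ℕ, 1 ≤ n → n ≤ 3 → ∀ l : ℝ, (l ≤ lam0 ∨ 2*lam0 ≤ l) → Dk χ n l = 0)
    (hL : 1 ≤ L) (hM : 1 ≤ M) (l : ℝ) (hl : 0 < l) :
    |Pf1 χ L M l| ≤ 3 * A / l := by
  have e0 := abs_UU0_le (χ := χ) hχ0 hχ1 l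
  have e1 := abs_UU_le hlam0 hlam0' hχ0 hχ1 hA1 hAb hDz 1 le_rfl (by norm_num) l hl
  have f0 := abs_VV0_le (χ := χ) (L := L) (M := M) hχ0 hχ1 l
  have f1 := abs_VV_le hlam0 hlam0' hχ0 hχ1 hA1 hAb hDz hL hM 1 le_rfl (by norm_num) l hl
  unfold Pf1
  refine le_trans (abs_add_le _ _) ?_
  rw [abs_mul, abs_mul]
  have p1 : |UU χ 1 l| * |VV χ L M 0 l| ≤ (A / l^1) * 1 :=
    mul_le_mul e1 f0 (abs_nonneg _) (by positivity)
  have p2 : |UU χ 0 l| * |VV χ L M 1 l| ≤ 1 * (2*A / l^1) :=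
    mul_le_mul e0 f1 (abs_nonneg _) (by norm_num)
  have : (A / l^1) * 1 + 1 * (2*A/l^1) = 3*A/l := by rw [pow_one]; ring
  linarith

lemma abs_Pf2_le (hlam0 : 0 < lam0) (hlam0' : lam0 ≤ 1/2)
    (hχ0 : ∀ l : ℝ, 0 ≤ χ l) (hχ1 : ∀ l : ℝ, χ l ≤ 1) (hA1 : 1 ≤ A)
    (hAb : ∀ n : ℕ, 1 ≤ n → n ≤ 3 → ∀ l : ℝ, |Dk χ n l| ≤ A)
    (hDz : ∀ n : ℕ, 1 ≤ n → n ≤ 3 → ∀ l : ℝ, (l ≤ lam0 ∨ 2*lam0 ≤ l) → Dk χ n l = 0)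
    (hL : 1 ≤ L) (hM : 1 ≤ M) (l : ℝ) (hl : 0 < l) :
    |Pf2 χ L M l| ≤ 8 * A^2 / l^2 := by
  have e0 := abs_UU0_le (χ := χ) hχ0 hχ1 l
  have e1 := abs_UU_le hlam0 hlam0' hχ0 hχ1 hA1 hAb hDz 1 le_rfl (by norm_num) l hl
  have e2 := abs_UU_le hlam0 hlam0' hχ0 hχ1 hA1 hAb hDz 2 (by norm_num) (by norm_num) l hl
  have f0 := abs_VV0_le (χ := χ) (L := L) (M := M) hχ0 hχ1 l
  have f1 := abs_VV_le hlam0 hlam0' hχ0 hχ1 hA1 hAb hDz hL hM 1 le_rfl (by norm_num) l hl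
  have f2 := abs_VV_le hlam0 hlam0' hχ0 hχ1 hA1 hAb hDz hL hM 2 (by norm_num) (by norm_num) l hl
  have hA0 : (0:ℝ) < A := lt_of_lt_of_le one_pos hA1
  unfold Pf2
  refine le_trans (abs_add_le _ _) (le_trans (add_le_add_left (abs_add_le _ _) _) ?_)
  rw [abs_mul, abs_mul, abs_mul, abs_mul]
  rw [_root_.abs_of_nonneg (by norm_num : (0:ℝ) ≤ 2)]
  have p1 : |UU χ 2 l| * |VV χ L M 0 l| ≤ (A / l^2) * 1 :=
    mul_le_mul e2 f0 (abs_nonneg _) (by positivity)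
  have p2 : |UU χ 1 l| * |VV χ L M 1 l| ≤ (A / l^1) * (2*A/l^1) :=
    mul_le_mul e1 f1 (abs_nonneg _) (by positivity)
  have p3 : |UU χ 0 l| * |VV χ L M 2 l| ≤ 1 * (2*A/l^2) :=
    mul_le_mul e0 f2 (abs_nonneg _) (by norm_num)
  have key : (A / l^2) * 1 + 2 * ((A / l^1) * (2*A/l^1)) + 1 * (2*A/l^2)
      = (3*A + 4*A^2) / l^2 := by
    rw [pow_one]; field_simp; ring
  have key2 : (3*A + 4*A^2) / l^2 ≤ 8 * A^2 / l^2 := by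
    gcongr
    nlinarith [sq_nonneg (A-1)]
  linarith [p1, p2, p3, key2, key,
    mul_le_mul_of_nonneg_left p2 (by norm_num : (0:ℝ) ≤ 2)]

lemma abs_Pf3_le (hlam0 : 0 < lam0) (hlam0' : lam0 ≤ 1/2)
    (hχ0 : ∀ l : ℝ, 0 ≤ χ l) (hχ1 : ∀ l : ℝ, χ l ≤ 1) (hA1 : 1 ≤ A)
    (hAb : ∀ n : ℕ, 1 ≤ n → n ≤ 3 → ∀ l : ℝ, |Dk χ n l| ≤ A)
    (hDz : ∀ n : ℕ, 1 ≤ n → n ≤ 3 → ∀ l : ℝ, (l ≤ lam0 ∨ 2*lam0 ≤ l) → Dk χ n l = 0)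
    (hL : 1 ≤ L) (hM : 1 ≤ M) (l : ℝ) (hl : 0 < l) :
    |Pf3 χ L M l| ≤ 16 * A^2 / l^3 := by
  have e0 := abs_UU0_le (χ := χ) hχ0 hχ1 l
  have e1 := abs_UU_le hlam0 hlam0' hχ0 hχ1 hA1 hAb hDz 1 le_rfl (by norm_num) l hl
  have e2 := abs_UU_le hlam0 hlam0' hχ0 hχ1 hA1 hAb hDz 2 (by norm_num) (by norm_num) l hl
  have e3 := abs_UU_le hlam0 hlam0' hχ0 hχ1 hA1 hAb hDz 3 (by norm_num) (by norm_num) l hl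
  have f0 := abs_VV0_le (χ := χ) (L := L) (M := M) hχ0 hχ1 l
  have f1 := abs_VV_le hlam0 hlam0' hχ0 hχ1 hA1 hAb hDz hL hM 1 le_rfl (by norm_num) l hl
  have f2 := abs_VV_le hlam0 hlam0' hχ0 hχ1 hA1 hAb hDz hL hM 2 (by norm_num) (by norm_num) l hl
  have f3 := abs_VV_le hlam0 hlam0' hχ0 hχ1 hA1 hAb hDz hL hM 3 (by norm_num) (by norm_num) l hl
  have hA0 : (0:ℝ) < A := lt_of_lt_of_le one_pos hA1
  unfold Pf3
  refine le_trans (abs_add_le _ _) (le_trans (add_le_add_left (abs_add_le _ _) _) (le_trans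
    (add_le_add_left (add_le_add_left (abs_add_le _ _) _) _) ?_))
  rw [abs_mul, abs_mul, abs_mul, abs_mul, abs_mul, abs_mul]
  rw [_root_.abs_of_nonneg (by norm_num : (0:ℝ) ≤ 3)]
  have p1 : |UU χ 3 l| * |VV χ L M 0 l| ≤ (A / l^3) * 1 :=
    mul_le_mul e3 f0 (abs_nonneg _) (by positivity)
  have p2 : |UU χ 2 l| * |VV χ L M 1 l| ≤ (A / l^2) * (2*A/l^1) :=
    mul_le_mul e2 f1 (abs_nonneg _) (by positivity)
  have p3 : |UU χ 1 l| * |VV χ L M 2 l| ≤ (A / l^1) * (2*A/l^2) :=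
    mul_le_mul e1 f2 (abs_nonneg _) (by positivity)
  have p4 : |UU χ 0 l| * |VV χ L M 3 l| ≤ 1 * (2*A/l^3) :=
    mul_le_mul e0 f3 (abs_nonneg _) (by norm_num)
  have key : (A / l^3) * 1 + 3 * ((A / l^2) * (2*A/l^1)) + 3 * ((A / l^1) * (2*A/l^2))
      + 1 * (2*A/l^3) = (3*A + 12*A^2) / l^3 := by
    rw [pow_one]; field_simp; ring
  have key2 : (3*A + 12*A^2) / l^3 ≤ 16 * A^2 / l^3 := by
    gcongr
    nlinarith [sq_nonneg (A-1)]
  linarith [mul_le_mul_of_nonneg_left p2 (by norm_num : (0:ℝ) ≤ 3),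
    mul_le_mul_of_nonneg_left p3 (by norm_num : (0:ℝ) ≤ 3)]

lemma abs_Ff1_le (hlam0 : 0 < lam0) (hlam0' : lam0 ≤ 1/2)
    (hχ0 : ∀ l : ℝ, 0 ≤ χ l) (hχ1 : ∀ l : ℝ, χ l ≤ 1) (hA1 : 1 ≤ A)
    (hAb : ∀ n : ℕ, 1 ≤ n → n ≤ 3 → ∀ l : ℝ, |Dk χ n l| ≤ A)
    (hDz : ∀ n : ℕ, 1 ≤ n → n ≤ 3 → ∀ l : ℝ, (l ≤ lam0 ∨ 2*lam0 ≤ l) → Dk χ n l = 0)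
    (hL : 1 ≤ L) (hM : 1 ≤ M) (l : ℝ) (hl : 0 < l) :
    |Ff1 χ L M l| ≤ 5 * A^2 / l^2 := by
  have hA0 : (0:ℝ) < A := lt_of_lt_of_le one_pos hA1
  have hP0 := abs_Pf0_le (χ := χ) (L := L) (M := M) hχ0 hχ1 l
  have hP1 := abs_Pf1_le hlam0 hlam0' hχ0 hχ1 hA1 hAb hDz hL hM l hl
  unfold Ff1
  refine le_trans (abs_sub _ _) ?_
  rw [abs_div, abs_div, _root_.abs_of_pos hl, _root_.abs_of_pos (pow_pos hl 2)]
  have s1 : |Pf1 χ L M l| / l ≤ (3*A/l) / l := by gcongr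
  have s2 : |Pf0 χ L M l| / l^2 ≤ 1 / l^2 := by gcongr
  have e1 : (3*A/l)/l = 3*A/l^2 := by rw [div_div, ← pow_two]
  have e2 : 3*A/l^2 + 1/l^2 = (3*A+1)/l^2 := by rw [← add_div]
  have e3 : (3*A+1)/l^2 ≤ 5*A^2/l^2 := by
    gcongr
    nlinarith [sq_nonneg (A-1)]
  linarith [s1, s2]

lemma abs_Ff3_le (hlam0 : 0 < lam0) (hlam0' : lam0 ≤ 1/2)
    (hχ0 : ∀ l : ℝ, 0 ≤ χ l) (hχ1 : ∀ l : ℝ, χ l ≤ 1) (hA1 : 1 ≤ A)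
    (hAb : ∀ n : ℕ, 1 ≤ n → n ≤ 3 → ∀ l : ℝ, |Dk χ n l| ≤ A)
    (hDz : ∀ n : ℕ, 1 ≤ n → n ≤ 3 → ∀ l : ℝ, (l ≤ lam0 ∨ 2*lam0 ≤ l) → Dk χ n l = 0)
    (hL : 1 ≤ L) (hM : 1 ≤ M) (l : ℝ) (hl : 0 < l) :
    |Ff3 χ L M l| ≤ 70 * A^2 / l^4 := by
  have hA0 : (0:ℝ) < A := lt_of_lt_of_le one_pos hA1
  have hP0 := abs_Pf0_le (χ := χ) (L := L) (M := M) hχ0 hχ1 l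
  have hP1 := abs_Pf1_le hlam0 hlam0' hχ0 hχ1 hA1 hAb hDz hL hM l hl
  have hP2 := abs_Pf2_le hlam0 hlam0' hχ0 hχ1 hA1 hAb hDz hL hM l hl
  have hP3 := abs_Pf3_le hlam0 hlam0' hχ0 hχ1 hA1 hAb hDz hL hM l hl
  unfold Ff3
  have t1 : |Pf3 χ L M l / l - 3 * Pf2 χ L M l / l ^ 2 + 6 * Pf1 χ L M l / l ^ 3
      - 6 * Pf0 χ L M l / l ^ 4|
      ≤ |Pf3 χ L M l| / l + 3 * |Pf2 χ L M l| / l^2 + 6 * |Pf1 χ L M l| / l^3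
        + 6 * |Pf0 χ L M l| / l^4 := by
    have u1 : |Pf3 χ L M l / l| = |Pf3 χ L M l| / l := by
      rw [abs_div, _root_.abs_of_pos hl]
    have u2 : |3 * Pf2 χ L M l / l ^ 2| = 3 * |Pf2 χ L M l| / l^2 := by
      rw [abs_div, abs_mul, _root_.abs_of_pos (pow_pos hl 2),
        _root_.abs_of_nonneg (by norm_num : (0:ℝ) ≤ 3)]
    have u3 : |6 * Pf1 χ L M l / l ^ 3| = 6 * |Pf1 χ L M l| / l^3 := by
      rw [abs_div, abs_mul, _root_.abs_of_pos (pow_pos hl 3),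
        _root_.abs_of_nonneg (by norm_num : (0:ℝ) ≤ 6)]
    have u4 : |6 * Pf0 χ L M l / l ^ 4| = 6 * |Pf0 χ L M l| / l^4 := by
      rw [abs_div, abs_mul, _root_.abs_of_pos (pow_pos hl 4),
        _root_.abs_of_nonneg (by norm_num : (0:ℝ) ≤ 6)]
    calc |Pf3 χ L M l / l - 3 * Pf2 χ L M l / l ^ 2 + 6 * Pf1 χ L M l / l ^ 3
        - 6 * Pf0 χ L M l / l ^ 4|
        ≤ |Pf3 χ L M l / l - 3 * Pf2 χ L M l / l ^ 2 + 6 * Pf1 χ L M l / l ^ 3|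
          + |6 * Pf0 χ L M l / l ^ 4| := abs_sub _ _
      _ ≤ (|Pf3 χ L M l / l - 3 * Pf2 χ L M l / l ^ 2| + |6 * Pf1 χ L M l / l ^ 3|)
          + |6 * Pf0 χ L M l / l ^ 4| := by gcongr; exact abs_add_le _ _
      _ ≤ ((|Pf3 χ L M l / l| + |3 * Pf2 χ L M l / l ^ 2|) + |6 * Pf1 χ L M l / l ^ 3|)
          + |6 * Pf0 χ L M l / l ^ 4| := by gcongr; exact abs_sub _ _
      _ = |Pf3 χ L M l| / l + 3 * |Pf2 χ L M l| / l^2 + 6 * |Pf1 χ L M l| / l^3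
          + 6 * |Pf0 χ L M l| / l^4 := by rw [u1, u2, u3, u4]
  refine le_trans t1 ?_
  have k1 : |Pf3 χ L M l| / l ≤ (16 * A^2 / l^3) / l := by gcongr
  have k2 : 3 * |Pf2 χ L M l| / l^2 ≤ 3 * (8 * A^2 / l^2) / l^2 := by gcongr
  have k3 : 6 * |Pf1 χ L M l| / l^3 ≤ 6 * (3 * A / l) / l^3 := by gcongr
  have k4 : 6 * |Pf0 χ L M l| / l^4 ≤ 6 * 1 / l^4 := by gcongr
  have r1 : (16 * A^2 / l^3) / l = 16 * A^2 / l^4 := by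
    rw [div_div]; ring_nf
  have r2 : 3 * (8 * A^2 / l^2) / l^2 = 24 * A^2 / l^4 := by
    rw [mul_div_assoc, div_div]; ring_nf
  have r3 : 6 * (3 * A / l) / l^3 = 18 * A / l^4 := by
    rw [mul_div_assoc, div_div]; ring_nf
  have r4 : (18 * A) / l^4 ≤ 18 * A^2 / l^4 := by
    gcongr
    nlinarith
  have r5 : 6 * 1 / l^4 ≤ 6 * A^2 / l^4 := by
    gcongr
    nlinarith
  have fin : 16 * A^2 / l^4 + 24 * A^2 / l^4 + 18 * A^2 / l^4 + 6 * A^2 / l^4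
      = 64 * A^2 / l^4 := by ring
  have fin2 : (64:ℝ) * A^2 / l^4 ≤ 70 * A^2 / l^4 := by gcongr <;> nlinarith
  linarith

/-- vanishing of `VV` for small `l`. -/
lemma VV_zero_low (hlam0 : 0 < lam0)
    (hχeq1 : ∀ l : ℝ, l ≤ lam0 → χ l = 1)
    (hDz : ∀ n : ℕ, 1 ≤ n → n ≤ 3 → ∀ l : ℝ, (l ≤ lam0 ∨ 2*lam0 ≤ l) → Dk χ n l = 0)
    (hL : 1 ≤ L) (hLM : L ≤ M) (j : ℕ) (hj : j ≤ 3)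
    (l : ℝ) (hl : l ≤ lam0 * L) : VV χ L M j l = 0 := by
  have hL0 : (0:ℝ) < L := lt_of_lt_of_le one_pos hL
  have hM0 : (0:ℝ) < M := lt_of_lt_of_le one_pos (le_trans hL hLM)
  have h1 : l / L ≤ lam0 := (div_le_iff₀ hL0).mpr (by linarith [mul_comm lam0 L])
  have h2 : l / M ≤ lam0 := by
    rcases le_or_gt l 0 with h | h
    · exact le_trans (div_nonpos_of_nonpos_of_nonneg h hM0.le) hlam0.le
    · have hd : l / M ≤ l / L := div_le_div_of_nonneg_left h.le hL0 hLM
      linarith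
  match j, hj with
  | 0, _ => simp [VV, Dk, hχeq1 _ h1, hχeq1 _ h2]
  | (m+1), hj =>
    have z1 := hDz (m+1) (Nat.succ_le_succ (Nat.zero_le m)) hj _ (Or.inl h1)
    have z2 := hDz (m+1) (Nat.succ_le_succ (Nat.zero_le m)) hj _ (Or.inl h2)
    simp [VV, z1, z2]

/-- vanishing of `VV` for large `l`. -/
lemma VV_zero_high (hlam0 : 0 < lam0)
    (hχeq0 : ∀ l : ℝ, 2 * lam0 ≤ l → χ l = 0)
    (hDz : ∀ n : ℕ, 1 ≤ n → n ≤ 3 → ∀ l : ℝ, (l ≤ lam0 ∨ 2*lam0 ≤ l) → Dk χ n l = 0)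
    (hL : 1 ≤ L) (hLM : L ≤ M) (j : ℕ) (hj : j ≤ 3)
    (l : ℝ) (hl : 2 * lam0 * M ≤ l) : VV χ L M j l = 0 := by
  have hL0 : (0:ℝ) < L := lt_of_lt_of_le one_pos hL
  have hM0 : (0:ℝ) < M := lt_of_lt_of_le one_pos (le_trans hL hLM)
  have hl0 : 0 ≤ l := le_trans (by positivity) hl
  have h2 : 2 * lam0 ≤ l / M := (le_div_iff₀ hM0).mpr (by linarith)
  have h1 : 2 * lam0 ≤ l / L := le_trans h2 (div_le_div_of_nonneg_left hl0 hL0 hLM)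
  match j, hj with
  | 0, _ => simp [VV, Dk, hχeq0 _ h1, hχeq0 _ h2]
  | (m+1), hj =>
    have z1 := hDz (m+1) (Nat.succ_le_succ (Nat.zero_le m)) hj _ (Or.inr h1)
    have z2 := hDz (m+1) (Nat.succ_le_succ (Nat.zero_le m)) hj _ (Or.inr h2)
    simp [VV, z1, z2]

lemma Pf_zero (hlam0 : 0 < lam0)
    (hχeq1 : ∀ l : ℝ, l ≤ lam0 → χ l = 1)
    (hχeq0 : ∀ l : ℝ, 2 * lam0 ≤ l → χ l = 0)
    (hDz : ∀ n : ℕ, 1 ≤ n → n ≤ 3 → ∀ l : ℝ, (l ≤ lam0 ∨ 2*lam0 ≤ l) → Dk χ n l = 0)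
    (hL : 1 ≤ L) (hLM : L ≤ M)
    (l : ℝ) (hl : l ≤ lam0 * L ∨ 2 * lam0 * M ≤ l) :
      Pf0 χ L M l = 0 ∧ Pf1 χ L M l = 0 ∧ Pf2 χ L M l = 0 ∧ Pf3 χ L M l = 0 := by
  have hv : ∀ j : ℕ, j ≤ 3 → VV χ L M j l = 0 := by
    intro j hj
    rcases hl with h | h
    · exact VV_zero_low hlam0 hχeq1 hDz hL hLM j hj l h
    · exact VV_zero_high hlam0 hχeq0 hDz hL hLM j hj l h
  refine ⟨?_, ?_, ?_, ?_⟩ <;>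
    simp [Pf0, Pf1, Pf2, Pf3, hv 0 (by norm_num), hv 1 (by norm_num),
      hv 2 (by norm_num), hv 3 (by norm_num)]

lemma Ff_zero (hlam0 : 0 < lam0)
    (hχeq1 : ∀ l : ℝ, l ≤ lam0 → χ l = 1)
    (hχeq0 : ∀ l : ℝ, 2 * lam0 ≤ l → χ l = 0)
    (hDz : ∀ n : ℕ, 1 ≤ n → n ≤ 3 → ∀ l : ℝ, (l ≤ lam0 ∨ 2*lam0 ≤ l) → Dk χ n l = 0)
    (hL : 1 ≤ L) (hLM : L ≤ M)
    (l : ℝ) (hl : l ≤ lam0 * L ∨ 2 * lam0 * M ≤ l) :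
      Ff0 χ L M l = 0 ∧ Ff1 χ L M l = 0 ∧ Ff3 χ L M l = 0 := by
  obtain ⟨h0, h1, h2, h3⟩ := Pf_zero hlam0 hχeq1 hχeq0 hDz hL hLM l hl
  refine ⟨?_, ?_, ?_⟩ <;> simp [Ff0, Ff1, Ff3, h0, h1, h2, h3]

end Bounds

section Bounds2
variable {lam0 : ℝ} {χ : ℝ → ℝ} {A L M : ℝ}
lemma Ff2_zero (hlam0 : 0 < lam0)
    (hχeq1 : ∀ l : ℝ, l ≤ lam0 → χ l = 1)
    (hχeq0 : ∀ l : ℝ, 2 * lam0 ≤ l → χ l = 0)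
    (hDz : ∀ n : ℕ, 1 ≤ n → n ≤ 3 → ∀ l : ℝ, (l ≤ lam0 ∨ 2*lam0 ≤ l) → Dk χ n l = 0)
    (hL : 1 ≤ L) (hLM : L ≤ M)
    (l : ℝ) (hl : l ≤ lam0 * L ∨ 2 * lam0 * M ≤ l) : Ff2 χ L M l = 0 := by
  obtain ⟨h0, h1, h2, h3⟩ := Pf_zero hlam0 hχeq1 hχeq0 hDz hL hLM l hl
  simp [Ff2, h0, h1, h2]

lemma psiL_eq (hlam0 : 0 < lam0) (hχeq1 : ∀ l : ℝ, l ≤ lam0 → χ l = 1) (N : ℝ) :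
    psiL χ N = fun l => (1 - χ l) * χ (l / N) / l := by
  funext l
  by_cases hl : 0 < l
  · simp [psiL, hl]
  · push_neg at hl
    have h1 : χ l = 1 := hχeq1 l (le_trans hl hlam0.le)
    simp [psiL, not_lt.mpr hl, h1]

lemma psiL_zero (hlam0 : 0 < lam0)
    (hχeq1 : ∀ l : ℝ, l ≤ lam0 → χ l = 1) (hχeq0 : ∀ l : ℝ, 2 * lam0 ≤ l → χ l = 0)
    (N : ℝ) (hN : 1 ≤ N) (l : ℝ) (h : l ∉ Icc lam0 (2 * lam0 * N)) : psiL χ N l = 0 := by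
  have hN0 : (0:ℝ) < N := lt_of_lt_of_le one_pos hN
  rw [mem_Icc, not_and_or] at h
  push_neg at h
  rcases h with h | h
  · have h1 : χ l = 1 := hχeq1 l h.le
    simp [psiL, h1]
  · have h2 : χ (l / N) = 0 := hχeq0 (l / N) ((le_div_iff₀ hN0).mpr h.le)
    simp [psiL, h2]
end Bounds2


lemma integral_inv_sq (c b : ℝ) (h0 : 0 < c) (hcb : c ≤ b) :
    ∫ l in c..b, (l^2)⁻¹ = c⁻¹ - b⁻¹ := by
  have h : ∀ x ∈ uIcc c b, HasDerivAt (fun l : ℝ => -(l⁻¹)) ((x^2)⁻¹) x := by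
    intro x hx
    rw [uIcc_of_le hcb] at hx
    have hx0 : x ≠ 0 := ne_of_gt (lt_of_lt_of_le h0 hx.1)
    simpa using (hasDerivAt_inv hx0).fun_neg
  have hint : IntervalIntegrable (fun x : ℝ => (x^2)⁻¹) volume c b := by
    apply ContinuousOn.intervalIntegrable
    apply ContinuousOn.inv₀ (continuous_pow 2).continuousOn
    intro x hx
    rw [uIcc_of_le hcb] at hx
    exact pow_ne_zero 2 (ne_of_gt (lt_of_lt_of_le h0 hx.1))
  have := intervalIntegral.integral_eq_sub_of_hasDerivAt h hint
  rw [this]; ring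

lemma integral_inv_pow4 (c b : ℝ) (h0 : 0 < c) (hcb : c ≤ b) :
    ∫ l in c..b, (l^4)⁻¹ = 3⁻¹ * (c^3)⁻¹ - 3⁻¹ * (b^3)⁻¹ := by
  have h : ∀ x ∈ uIcc c b, HasDerivAt (fun l : ℝ => -(3⁻¹ * (l^3)⁻¹)) ((x^4)⁻¹) x := by
    intro x hx
    rw [uIcc_of_le hcb] at hx
    have hx0 : (0:ℝ) < x := lt_of_lt_of_le h0 hx.1
    have h1 := ((hasDerivAt_pow 3 x).inv (pow_ne_zero 3 (ne_of_gt hx0))).const_mul (3⁻¹ : ℝ)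
    have h2 := h1.neg
    refine h2.congr_deriv ?_
    push_cast
    field_simp
  have hint : IntervalIntegrable (fun x : ℝ => (x^4)⁻¹) volume c b := by
    apply ContinuousOn.intervalIntegrable
    apply ContinuousOn.inv₀ (continuous_pow 4).continuousOn
    intro x hx
    rw [uIcc_of_le hcb] at hx
    exact pow_ne_zero 4 (ne_of_gt (lt_of_lt_of_le h0 hx.1))
  have := intervalIntegral.integral_eq_sub_of_hasDerivAt h hint
  rw [this]; ring

lemma integrableOn_Ioi_of_zero_outside (g : ℝ → ℂ) (s t : ℝ)
    (hcont : ContinuousOn g (Icc s t)) (hz : ∀ l, l ∉ Icc s t → g l = 0) :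
    IntegrableOn g (Ioi (0:ℝ)) := by
  have hind : g = (Icc s t).indicator g := by
    funext x
    by_cases hx : x ∈ Icc s t
    · simp [hx]
    · simp [hx, hz x hx]
  have hInt : IntegrableOn g (Icc s t) := hcont.integrableOn_compact isCompact_Icc
  have : Integrable ((Icc s t).indicator g) :=
    (integrable_indicator_iff measurableSet_Icc).mpr hInt
  rw [hind]
  exact this.integrableOn

lemma setIntegral_Ioi_eq_intervalIntegral (g : ℝ → ℂ) (s t : ℝ)
    (h0 : 0 < s) (hst : s ≤ t) (hz : ∀ l, l ∉ Icc s t → g l = 0) :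
    ∫ l in Ioi (0:ℝ), g l = ∫ l in s..t, g l := by
  have e1 : ∫ l in Ioi (0:ℝ), g l = ∫ l in Ioi (0:ℝ), (Icc s t).indicator g l := by
    apply setIntegral_congr_fun measurableSet_Ioi
    intro x _
    by_cases hx : x ∈ Icc s t
    · simp [hx]
    · simp [hx, hz x hx]
  rw [e1, setIntegral_indicator measurableSet_Icc]
  have e2 : Ioi (0:ℝ) ∩ Icc s t = Icc s t := by
    apply inter_eq_self_of_subset_right
    intro x hx
    exact lt_of_lt_of_le h0 hx.1
  rw [e2, integral_Icc_eq_integral_Ioc, ← intervalIntegral.integral_of_le hst]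
section MainEst
variable {lam0 : ℝ} {χ : ℝ → ℝ} {A : ℝ}

set_option maxHeartbeats 2000000 in
lemma main_est (hlam0 : 0 < lam0) (hlam0' : lam0 ≤ 1/2)
    (hχ : ContDiff ℝ (⊤:ℕ∞) χ)
    (hχ0 : ∀ l : ℝ, 0 ≤ χ l) (hχ1 : ∀ l : ℝ, χ l ≤ 1)
    (hχeq1 : ∀ l : ℝ, l ≤ lam0 → χ l = 1)
    (hχeq0 : ∀ l : ℝ, 2 * lam0 ≤ l → χ l = 0)
    (hA1 : 1 ≤ A)
    (hAb : ∀ n : ℕ, 1 ≤ n → n ≤ 3 → ∀ l : ℝ, |Dk χ n l| ≤ A)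
    (hDz : ∀ n : ℕ, 1 ≤ n → n ≤ 3 → ∀ l : ℝ, (l ≤ lam0 ∨ 2*lam0 ≤ l) → Dk χ n l = 0)
    (L M : ℝ) (hL : 1 ≤ L) (hLM : L < M) (k : ℝ) (hk : k ≠ 0) :
    ‖psiLhat χ L k - psiLhat χ M k‖ ≤ 24 * A^2 / lam0^3 * ((|k| * L)^3)⁻¹
    ∧ (|k| * L ≤ 1 →
      ‖psiLhat χ L k - psiLhat χ M k‖
        ≤ (2 + Real.log lam0⁻¹ + 5*A^2) * japR (Real.log (|k| * L))) := by
  have hL0 : (0:ℝ) < L := lt_of_lt_of_le one_pos hL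
  have hM : (1:ℝ) ≤ M := le_of_lt (lt_of_le_of_lt hL hLM)
  have hM0 : (0:ℝ) < M := lt_of_lt_of_le one_pos hM
  have hLM' : L ≤ M := hLM.le
  have hk0 : (0:ℝ) < |k| := abs_pos.mpr hk
  have hA0 : (0:ℝ) < A := lt_of_lt_of_le one_pos hA1
  set a : ℝ := lam0 * L with ha_def
  set b : ℝ := 2 * lam0 * M with hb_def
  have ha : 0 < a := by positivity
  have hab : a ≤ b := by
    rw [ha_def, hb_def]; nlinarith
  have hb : 0 < b := lt_of_lt_of_le ha hab
  have hEcont : Continuous (fun l : ℝ => Complex.exp (-(Complex.I * k * l))) := by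
    fun_prop
  have hFz : ∀ l : ℝ, l ≤ a ∨ b ≤ l →
      Ff0 χ L M l = 0 ∧ Ff1 χ L M l = 0 ∧ Ff2 χ L M l = 0 ∧ Ff3 χ L M l = 0 := by
    intro l hl
    obtain ⟨h0, h1, h3⟩ := Ff_zero hlam0 hχeq1 hχeq0 hDz hL hLM' l hl
    exact ⟨h0, h1, Ff2_zero hlam0 hχeq1 hχeq0 hDz hL hLM' l hl, h3⟩
  have hIccsub : Icc a b ⊆ {l : ℝ | l ≠ 0} := fun x hx =>
    ne_of_gt (lt_of_lt_of_le ha hx.1)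
  have hcF0 : ContinuousOn (fun l => Ff0 χ L M l) (Icc a b) :=
    (continuousOn_Ff0 χ hχ L M).mono hIccsub
  have hcF1 : ContinuousOn (fun l => Ff1 χ L M l) (Icc a b) :=
    (continuousOn_Ff1 χ hχ L M).mono hIccsub
  have hcF2 : ContinuousOn (fun l => Ff2 χ L M l) (Icc a b) :=
    (continuousOn_Ff2 χ hχ L M).mono hIccsub
  have hcF3 : ContinuousOn (fun l => Ff3 χ L M l) (Icc a b) :=
    (continuousOn_Ff3 χ hχ L M).mono hIccsub
  have hint : ∀ N : ℝ, 1 ≤ N →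
      IntegrableOn (fun l : ℝ => Complex.exp (-(Complex.I * k * l)) * (psiL χ N l : ℂ))
        (Ioi (0:ℝ)) := by
    intro N hN
    apply integrableOn_Ioi_of_zero_outside _ lam0 (2 * lam0 * N)
    · rw [psiL_eq hlam0 hχeq1 N]
      apply (hEcont.continuousOn.mul _)
      apply Complex.continuous_ofReal.comp_continuousOn
      apply ContinuousOn.div
      · exact ((continuous_const.sub hχ.continuous).mul
          (hχ.continuous.comp (continuous_id.div_const N))).continuousOn
      · exact continuous_id.continuousOn
      · intro x hx
        exact ne_of_gt (lt_of_lt_of_le hlam0 hx.1)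
    · intro l hl
      rw [psiL_zero hlam0 hχeq1 hχeq0 N hN l hl]
      simp
  have E1 : psiLhat χ L k - psiLhat χ M k
      = ∫ l in Ioi (0:ℝ), Complex.exp (-(Complex.I * k * l)) * (Ff0 χ L M l : ℂ) := by
    unfold psiLhat
    rw [← integral_sub (hint L hL) (hint M hM)]
    apply setIntegral_congr_fun measurableSet_Ioi
    intro l hl
    have hl0 : (0:ℝ) < l := hl
    have hdiff : psiL χ L l - psiL χ M l = Ff0 χ L M l := by
      have hVV0 : VV χ L M 0 l = χ (l / L) - χ (l / M) := by simp [VV, Dk]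
      have hUU0 : UU χ 0 l = 1 - χ l := rfl
      simp only [psiL, if_pos hl0, Ff0, Pf0, hVV0, hUU0]
      field_simp
    beta_reduce
    rw [← hdiff]
    push_cast
    ring
  have E2 : (∫ l in Ioi (0:ℝ), Complex.exp (-(Complex.I * k * l)) * (Ff0 χ L M l : ℂ))
      = ∫ l in a..b, Complex.exp (-(Complex.I * k * l)) * (Ff0 χ L M l : ℂ) := by
    apply setIntegral_Ioi_eq_intervalIntegral _ a b ha hab
    intro l hl
    rw [mem_Icc, not_and_or] at hl
    push_neg at hl
    have h0 : Ff0 χ L M l = 0 := by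
      rcases hl with h | h
      · exact (hFz l (Or.inl h.le)).1
      · exact (hFz l (Or.inr h.le)).1
    rw [h0]
    simp
  have hIkn : ‖Complex.I * (k:ℂ)‖ = |k| := by
    rw [norm_mul, Complex.norm_I, one_mul, Complex.norm_real, Real.norm_eq_abs]
  have hder0 : ∀ x ∈ Icc a b, HasDerivAt (fun y => Ff0 χ L M y) (Ff1 χ L M x) x :=
    fun x hx => hasDerivAt_Ff0 χ hχ L M (ne_of_gt hL0) (ne_of_gt hM0) x (hIccsub hx)
  have hder1 : ∀ x ∈ Icc a b, HasDerivAt (fun y => Ff1 χ L M y) (Ff2 χ L M x) x :=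
    fun x hx => hasDerivAt_Ff1 χ hχ L M (ne_of_gt hL0) (ne_of_gt hM0) x (hIccsub hx)
  have hder2 : ∀ x ∈ Icc a b, HasDerivAt (fun y => Ff2 χ L M y) (Ff3 χ L M x) x :=
    fun x hx => hasDerivAt_Ff2 χ hχ L M (ne_of_gt hL0) (ne_of_gt hM0) x (hIccsub hx)
  have hF0a : Ff0 χ L M a = 0 := (hFz a (Or.inl le_rfl)).1
  have hF0b : Ff0 χ L M b = 0 := (hFz b (Or.inr le_rfl)).1
  have hF1a : Ff1 χ L M a = 0 := (hFz a (Or.inl le_rfl)).2.1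
  have hF1b : Ff1 χ L M b = 0 := (hFz b (Or.inr le_rfl)).2.1
  have hF2a : Ff2 χ L M a = 0 := (hFz a (Or.inl le_rfl)).2.2.1
  have hF2b : Ff2 χ L M b = 0 := (hFz b (Or.inr le_rfl)).2.2.1
  have step1 := ftc_step k a b _ _ hab hder0 hcF0 hcF1
  rw [hF0a, hF0b] at step1
  simp only [Complex.ofReal_zero, mul_zero, add_zero, sub_zero] at step1
  have step2 := ftc_step k a b _ _ hab hder1 hcF1 hcF2
  rw [hF1a, hF1b] at step2
  simp only [Complex.ofReal_zero, mul_zero, add_zero, sub_zero] at step2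
  have step3 := ftc_step k a b _ _ hab hder2 hcF2 hcF3
  rw [hF2a, hF2b] at step3
  simp only [Complex.ofReal_zero, mul_zero, add_zero, sub_zero] at step3
  have hbound3 : ‖∫ l in a..b, Complex.exp (-(Complex.I * k * l)) * (Ff3 χ L M l : ℂ)‖
      ≤ 24 * A^2 / a^3 := by
    have hgint : IntervalIntegrable (fun l : ℝ => 70 * A^2 * (l^4)⁻¹) volume a b := by
      apply ContinuousOn.intervalIntegrable
      apply ContinuousOn.mul continuousOn_const
      apply ContinuousOn.inv₀ (continuous_pow 4).continuousOn
      intro x hx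
      rw [uIcc_of_le hab] at hx
      exact pow_ne_zero 4 (ne_of_gt (lt_of_lt_of_le ha hx.1))
    have hae : ∀ᵐ t : ℝ ∂(volume.restrict (Set.uIoc a b)),
        ‖Complex.exp (-(Complex.I * k * t)) * (Ff3 χ L M t : ℂ)‖ ≤ 70 * A^2 * (t^4)⁻¹ := by
      rw [uIoc_of_le hab]
      refine (ae_restrict_iff' measurableSet_Ioc).mpr (Filter.Eventually.of_forall ?_)
      intro t ht
      have ht0 : 0 < t := lt_of_lt_of_le ha ht.1.le
      rw [norm_mul, norm_cexp_osc, one_mul, Complex.norm_real, Real.norm_eq_abs]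
      have h70 := abs_Ff3_le hlam0 hlam0' hχ0 hχ1 hA1 hAb hDz hL hM t ht0
      rw [div_eq_mul_inv] at h70
      exact h70
    have h1 := intervalIntegral.norm_integral_le_abs_of_norm_le hae hgint
    have h2 : (∫ t in a..b, 70 * A^2 * (t^4)⁻¹)
        = 70 * A^2 * (3⁻¹ * (a^3)⁻¹ - 3⁻¹ * (b^3)⁻¹) := by
      rw [intervalIntegral.integral_const_mul, integral_inv_pow4 a b ha hab]
    have h3 : (0:ℝ) ≤ 70 * A^2 * (3⁻¹ * (a^3)⁻¹ - 3⁻¹ * (b^3)⁻¹) := by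
      have hinv : (b^3)⁻¹ ≤ (a^3)⁻¹ := by gcongr
      nlinarith
    have h4 : 70 * A^2 * (3⁻¹ * (a^3)⁻¹ - 3⁻¹ * (b^3)⁻¹) ≤ 24 * A^2 / a^3 := by
      have hbi : (0:ℝ) ≤ (b^3)⁻¹ := by positivity
      have hai : (0:ℝ) < (a^3)⁻¹ := by positivity
      rw [div_eq_mul_inv]
      nlinarith
    calc ‖∫ l in a..b, Complex.exp (-(Complex.I * k * l)) * (Ff3 χ L M l : ℂ)‖
        ≤ |∫ t in a..b, 70 * A^2 * (t^4)⁻¹| := h1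
      _ = 70 * A^2 * (3⁻¹ * (a^3)⁻¹ - 3⁻¹ * (b^3)⁻¹) := by rw [h2, _root_.abs_of_nonneg h3]
      _ ≤ 24 * A^2 / a^3 := h4
  have hnorm3 : ‖∫ l in a..b, Complex.exp (-(Complex.I * k * l)) * (Ff3 χ L M l : ℂ)‖
      = |k|^3 * ‖∫ l in a..b, Complex.exp (-(Complex.I * k * l)) * (Ff0 χ L M l : ℂ)‖ := by
    rw [step3, step2, step1]
    simp only [norm_mul, Complex.norm_I, Complex.norm_real, Real.norm_eq_abs, one_mul]
    ring
  have hIint : ‖psiLhat χ L k - psiLhat χ M k‖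
      = ‖∫ l in a..b, Complex.exp (-(Complex.I * k * l)) * (Ff0 χ L M l : ℂ)‖ := by
    rw [E1, E2]
  have high : ‖psiLhat χ L k - psiLhat χ M k‖ ≤ 24 * A^2 / lam0^3 * ((|k| * L)^3)⁻¹ := by
    rw [hIint]
    have h5 : |k|^3 * ‖∫ l in a..b, Complex.exp (-(Complex.I * k * l)) * (Ff0 χ L M l : ℂ)‖
        ≤ 24 * A^2 / a^3 := by
      rw [← hnorm3]; exact hbound3
    have hk3 : (0:ℝ) < |k|^3 := by positivity
    rw [show (24:ℝ) * A^2 / lam0^3 * ((|k| * L)^3)⁻¹ = (24 * A^2 / a^3) / |k|^3 by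
      rw [ha_def]; field_simp]
    rw [le_div_iff₀ hk3]
    linarith [h5]
  refine ⟨high, ?_⟩
  intro hkL
  rw [hIint]
  have hTL : L ≤ |k|⁻¹ := by
    rw [← one_div]
    rw [le_div_iff₀ hk0]
    linarith [mul_comm |k| L, hkL]
  have hTa : a ≤ |k|⁻¹ := by
    have haL : a ≤ L := by rw [ha_def]; nlinarith
    linarith
  set c : ℝ := min (|k|⁻¹) b with hc_def
  have hac : a ≤ c := le_min hTa hab
  have hcb : c ≤ b := min_le_right _ _
  have hc0 : 0 < c := lt_of_lt_of_le ha hac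
  have hcont_all : ContinuousOn
      (fun l : ℝ => Complex.exp (-(Complex.I * k * l)) * (Ff0 χ L M l : ℂ)) (Icc a b) :=
    hEcont.continuousOn.mul (Complex.continuous_ofReal.comp_continuousOn hcF0)
  have hint1 : IntervalIntegrable
      (fun l : ℝ => Complex.exp (-(Complex.I * k * l)) * (Ff0 χ L M l : ℂ)) volume a c := by
    apply ContinuousOn.intervalIntegrable
    apply hcont_all.mono
    rw [uIcc_of_le hac]
    exact Icc_subset_Icc le_rfl hcb
  have hint2 : IntervalIntegrable
      (fun l : ℝ => Complex.exp (-(Complex.I * k * l)) * (Ff0 χ L M l : ℂ)) volume c b := by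
    apply ContinuousOn.intervalIntegrable
    apply hcont_all.mono
    rw [uIcc_of_le hcb]
    exact Icc_subset_Icc hac le_rfl
  have hsplit : (∫ l in a..b, Complex.exp (-(Complex.I * k * l)) * (Ff0 χ L M l : ℂ))
      = (∫ l in a..c, Complex.exp (-(Complex.I * k * l)) * (Ff0 χ L M l : ℂ))
        + ∫ l in c..b, Complex.exp (-(Complex.I * k * l)) * (Ff0 χ L M l : ℂ) :=
    (intervalIntegral.integral_add_adjacent_intervals hint1 hint2).symm
  -- first part : trivial bound
  have hjap1 : 1 ≤ japR (Real.log (|k| * L)) := by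
    unfold japR
    have h := Real.sqrt_le_sqrt (show (1:ℝ) ≤ 1 + (Real.log (|k| * L))^2 by
      nlinarith [sq_nonneg (Real.log (|k| * L))])
    rwa [Real.sqrt_one] at h
  have hjap2 : _root_.abs (Real.log (|k| * L)) ≤ japR (Real.log (|k| * L)) := by
    unfold japR
    rw [← Real.sqrt_sq_eq_abs]
    apply Real.sqrt_le_sqrt
    nlinarith
  have hlog0 : 0 ≤ Real.log lam0⁻¹ := by
    apply Real.log_nonneg
    have h2 : lam0 * lam0⁻¹ = 1 := mul_inv_cancel₀ (ne_of_gt hlam0)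
    nlinarith [inv_pos.mpr hlam0]
  have hpart1 : ‖∫ l in a..c, Complex.exp (-(Complex.I * k * l)) * (Ff0 χ L M l : ℂ)‖
      ≤ _root_.abs (Real.log (|k| * L)) + Real.log lam0⁻¹ := by
    have hg1 : IntervalIntegrable (fun l : ℝ => l⁻¹) volume a c := by
      apply ContinuousOn.intervalIntegrable
      apply ContinuousOn.inv₀ continuous_id.continuousOn
      intro x hx
      rw [uIcc_of_le hac] at hx
      exact ne_of_gt (lt_of_lt_of_le ha hx.1)
    have hae1 : ∀ᵐ t : ℝ ∂(volume.restrict (Set.uIoc a c)),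
        ‖Complex.exp (-(Complex.I * k * t)) * (Ff0 χ L M t : ℂ)‖ ≤ t⁻¹ := by
      rw [uIoc_of_le hac]
      refine (ae_restrict_iff' measurableSet_Ioc).mpr (Filter.Eventually.of_forall ?_)
      intro t ht
      have ht0 : 0 < t := lt_of_lt_of_le ha ht.1.le
      rw [norm_mul, norm_cexp_osc, one_mul, Complex.norm_real, Real.norm_eq_abs]
      exact abs_Ff0_le hχ0 hχ1 t ht0
    have h1 := intervalIntegral.norm_integral_le_abs_of_norm_le hae1 hg1
    have h2 : (∫ t in a..c, t⁻¹) = Real.log (c / a) :=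
      integral_inv_of_pos ha hc0
    have h3 : 0 ≤ Real.log (c / a) :=
      Real.log_nonneg ((one_le_div ha).mpr hac)
    have h4 : Real.log (c / a) ≤ Real.log (|k|⁻¹ / a) := by
      apply Real.log_le_log (by positivity)
      gcongr
      exact min_le_left _ _
    have h5 : Real.log (|k|⁻¹ / a) = -(Real.log (|k| * L)) + Real.log lam0⁻¹ := by
      rw [ha_def, Real.log_div (by positivity) (by positivity), Real.log_inv,
        Real.log_mul (ne_of_gt hlam0) (ne_of_gt hL0),
        Real.log_mul (ne_of_gt hk0) (ne_of_gt hL0), Real.log_inv]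
      ring
    have h6 : -(Real.log (|k| * L)) ≤ _root_.abs (Real.log (|k| * L)) := neg_le_abs _
    calc ‖∫ l in a..c, Complex.exp (-(Complex.I * k * l)) * (Ff0 χ L M l : ℂ)‖
        ≤ |∫ t in a..c, t⁻¹| := h1
      _ = Real.log (c / a) := by rw [h2, _root_.abs_of_nonneg h3]
      _ ≤ Real.log (|k|⁻¹ / a) := h4
      _ ≤ _root_.abs (Real.log (|k| * L)) + Real.log lam0⁻¹ := by rw [h5]; linarith
  -- second part
  have hpart2 : ‖∫ l in c..b, Complex.exp (-(Complex.I * k * l)) * (Ff0 χ L M l : ℂ)‖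
      ≤ 5 * A^2 + 1 := by
    rcases le_or_gt b (|k|⁻¹) with hble | hble
    · have hcb' : c = b := min_eq_right hble
      rw [hcb', intervalIntegral.integral_same]
      rw [norm_zero]
      nlinarith
    · have hceq : c = |k|⁻¹ := min_eq_left hble.le
      have hsub : Icc c b ⊆ Icc a b := Icc_subset_Icc hac le_rfl
      have hder0' : ∀ x ∈ Icc c b, HasDerivAt (fun y => Ff0 χ L M y) (Ff1 χ L M x) x :=
        fun x hx => hder0 x (hsub hx)
      have hstep := ftc_step k c b _ _ hcb hder0' (hcF0.mono hsub) (hcF1.mono hsub)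
      rw [hF0b] at hstep
      simp only [Complex.ofReal_zero, mul_zero, add_zero] at hstep
      have hrearr : (Complex.I * (k:ℂ))
            * ∫ l in c..b, Complex.exp (-(Complex.I * k * l)) * (Ff0 χ L M l : ℂ)
          = (∫ l in c..b, Complex.exp (-(Complex.I * k * l)) * (Ff1 χ L M l : ℂ))
            + Complex.exp (-(Complex.I * k * c)) * (Ff0 χ L M c : ℂ) := by
        linear_combination -hstep
      have hcinv : c⁻¹ = |k| := by rw [hceq, inv_inv]
      have hT1 : ‖∫ l in c..b, Complex.exp (-(Complex.I * k * l)) * (Ff1 χ L M l : ℂ)‖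
          ≤ 5 * A^2 * |k| := by
        have hg2 : IntervalIntegrable (fun l : ℝ => 5 * A^2 * (l^2)⁻¹) volume c b := by
          apply ContinuousOn.intervalIntegrable
          apply ContinuousOn.mul continuousOn_const
          apply ContinuousOn.inv₀ (continuous_pow 2).continuousOn
          intro x hx
          rw [uIcc_of_le hcb] at hx
          exact pow_ne_zero 2 (ne_of_gt (lt_of_lt_of_le hc0 hx.1))
        have hae2 : ∀ᵐ t : ℝ ∂(volume.restrict (Set.uIoc c b)),
            ‖Complex.exp (-(Complex.I * k * t)) * (Ff1 χ L M t : ℂ)‖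
              ≤ 5 * A^2 * (t^2)⁻¹ := by
          rw [uIoc_of_le hcb]
          refine (ae_restrict_iff' measurableSet_Ioc).mpr (Filter.Eventually.of_forall ?_)
          intro t ht
          have ht0 : 0 < t := lt_of_lt_of_le hc0 ht.1.le
          rw [norm_mul, norm_cexp_osc, one_mul, Complex.norm_real, Real.norm_eq_abs]
          have h5A := abs_Ff1_le hlam0 hlam0' hχ0 hχ1 hA1 hAb hDz hL hM t ht0
          rw [div_eq_mul_inv] at h5A
          exact h5A
        have h1 := intervalIntegral.norm_integral_le_abs_of_norm_le hae2 hg2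
        have h2 : (∫ t in c..b, 5 * A^2 * (t^2)⁻¹) = 5 * A^2 * (c⁻¹ - b⁻¹) := by
          rw [intervalIntegral.integral_const_mul, integral_inv_sq c b hc0 hcb]
        have h3 : (0:ℝ) ≤ 5 * A^2 * (c⁻¹ - b⁻¹) := by
          have : b⁻¹ ≤ c⁻¹ := by gcongr
          nlinarith
        have h4 : 5 * A^2 * (c⁻¹ - b⁻¹) ≤ 5 * A^2 * |k| := by
          have hbinv : (0:ℝ) ≤ b⁻¹ := by positivity
          nlinarith [hcinv]
        calc ‖∫ l in c..b, Complex.exp (-(Complex.I * k * l)) * (Ff1 χ L M l : ℂ)‖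
            ≤ |∫ t in c..b, 5 * A^2 * (t^2)⁻¹| := h1
          _ = 5 * A^2 * (c⁻¹ - b⁻¹) := by rw [h2, _root_.abs_of_nonneg h3]
          _ ≤ 5 * A^2 * |k| := h4
      have hT2 : ‖Complex.exp (-(Complex.I * k * c)) * (Ff0 χ L M c : ℂ)‖ ≤ |k| := by
        rw [norm_mul, norm_cexp_osc, one_mul, Complex.norm_real, Real.norm_eq_abs]
        have := abs_Ff0_le (χ := χ) (L := L) (M := M) hχ0 hχ1 c hc0
        rw [hcinv] at this
        exact this
      have hnormineq : |k| * ‖∫ l in c..b,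
            Complex.exp (-(Complex.I * k * l)) * (Ff0 χ L M l : ℂ)‖
          ≤ 5 * A^2 * |k| + |k| := by
        have := congrArg norm hrearr
        rw [norm_mul, hIkn] at this
        rw [this]
        exact le_trans (norm_add_le _ _) (add_le_add hT1 hT2)
      have := (mul_le_mul_iff_right₀ hk0).mp (by linarith [hnormineq] :
        |k| * ‖∫ l in c..b, Complex.exp (-(Complex.I * k * l)) * (Ff0 χ L M l : ℂ)‖
          ≤ |k| * (5 * A^2 + 1))
      linarith [this]
  calc ‖∫ l in a..b, Complex.exp (-(Complex.I * k * l)) * (Ff0 χ L M l : ℂ)‖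
      ≤ ‖∫ l in a..c, Complex.exp (-(Complex.I * k * l)) * (Ff0 χ L M l : ℂ)‖
        + ‖∫ l in c..b, Complex.exp (-(Complex.I * k * l)) * (Ff0 χ L M l : ℂ)‖ := by
        rw [hsplit]; exact norm_add_le _ _
    _ ≤ (_root_.abs (Real.log (|k| * L)) + Real.log lam0⁻¹) + (5 * A^2 + 1) := add_le_add hpart1 hpart2
    _ ≤ (2 + Real.log lam0⁻¹ + 5*A^2) * japR (Real.log (|k| * L)) := by
        nlinarith [mul_nonneg (by nlinarith : (0:ℝ) ≤ 1 + Real.log lam0⁻¹ + 5*A^2)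
          (by linarith : (0:ℝ) ≤ japR (Real.log (|k| * L)) - 1), hjap1, hjap2]
end MainEst

theorem stmt14 (lam0 : ℝ) (hlam0 : 0 < lam0) (hlam0' : lam0 ≤ 1 / 2)
    (χ : ℝ → ℝ) (hχ : ContDiff ℝ (⊤ : ℕ∞) χ) (hχ0 : ∀ l : ℝ, 0 ≤ χ l) (hχ1 : ∀ l : ℝ, χ l ≤ 1)
    (hχeq1 : ∀ l : ℝ, l ≤ lam0 → χ l = 1)
    (hχeq0 : ∀ l : ℝ, 2 * lam0 ≤ l → χ l = 0) :
    ∃ C : ℝ, ∀ L M : ℝ, 1 ≤ L → L < M → ∀ k : ℝ, k ≠ 0 →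
      ‖psiLhat χ L k - psiLhat χ M k‖
        ≤ C * min (japR (Real.log (|k| * L))) ((|k| * L) ^ (-(3 : ℝ))) := by
  have hχ' : ContDiff ℝ ((⊤:ℕ∞)) χ := hχ.of_le (by simp)
  have hcont : ∀ n : ℕ, Continuous (Dk χ n) := fun n => continuous_Dk χ hχ' n
  -- vanishing of derivatives below lam0
  have hz1le : ∀ l ≤ lam0, Dk χ 1 l = 0 := by
    have h := deriv_zero_on_Iic χ
      (show Continuous (deriv χ) from (deriv_Dk χ 0) ▸ hcont 1) lam0 1 hχeq1
    intro l hl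
    have e : deriv χ = Dk χ 1 := deriv_Dk χ 0
    rw [← e]; exact h l hl
  have hz2le : ∀ l ≤ lam0, Dk χ 2 l = 0 := by
    have h := deriv_zero_on_Iic (Dk χ 1)
      (show Continuous (deriv (Dk χ 1)) from (deriv_Dk χ 1) ▸ hcont 2) lam0 0 hz1le
    intro l hl
    rw [← deriv_Dk χ 1]; exact h l hl
  have hz3le : ∀ l ≤ lam0, Dk χ 3 l = 0 := by
    have h := deriv_zero_on_Iic (Dk χ 2)
      (show Continuous (deriv (Dk χ 2)) from (deriv_Dk χ 2) ▸ hcont 3) lam0 0 hz2le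
    intro l hl
    rw [← deriv_Dk χ 2]; exact h l hl
  -- vanishing of derivatives above 2*lam0
  have hz1ge : ∀ l, 2*lam0 ≤ l → Dk χ 1 l = 0 := by
    have h := deriv_zero_on_Ici χ
      (show Continuous (deriv χ) from (deriv_Dk χ 0) ▸ hcont 1) (2*lam0) 0 hχeq0
    intro l hl
    have e : deriv χ = Dk χ 1 := deriv_Dk χ 0
    rw [← e]; exact h l hl
  have hz2ge : ∀ l, 2*lam0 ≤ l → Dk χ 2 l = 0 := by
    have h := deriv_zero_on_Ici (Dk χ 1)
      (show Continuous (deriv (Dk χ 1)) from (deriv_Dk χ 1) ▸ hcont 2) (2*lam0) 0 hz1ge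
    intro l hl
    rw [← deriv_Dk χ 1]; exact h l hl
  have hz3ge : ∀ l, 2*lam0 ≤ l → Dk χ 3 l = 0 := by
    have h := deriv_zero_on_Ici (Dk χ 2)
      (show Continuous (deriv (Dk χ 2)) from (deriv_Dk χ 2) ▸ hcont 3) (2*lam0) 0 hz2ge
    intro l hl
    rw [← deriv_Dk χ 2]; exact h l hl
  have hDz : ∀ n : ℕ, 1 ≤ n → n ≤ 3 → ∀ l : ℝ, (l ≤ lam0 ∨ 2*lam0 ≤ l) → Dk χ n l = 0 := by
    intro n h1 h3 l hl
    interval_cases n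
    · rcases hl with h | h
      · exact hz1le l h
      · exact hz1ge l h
    · rcases hl with h | h
      · exact hz2le l h
      · exact hz2ge l h
    · rcases hl with h | h
      · exact hz3le l h
      · exact hz3ge l h
  -- global bound on derivatives
  have hbd : ∀ n : ℕ, 1 ≤ n → n ≤ 3 → ∃ B : ℝ, 1 ≤ B ∧ ∀ l, |Dk χ n l| ≤ B := by
    intro n h1 h3
    apply bounded_of_zero_outside (Dk χ n) (hcont n) lam0 (2*lam0)
    intro l hl
    rw [mem_Icc, not_and_or] at hl
    push_neg at hl
    rcases hl with h | h
    · exact hDz n h1 h3 l (Or.inl h.le)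
    · exact hDz n h1 h3 l (Or.inr h.le)
  obtain ⟨B1, hB11, hB1⟩ := hbd 1 le_rfl (by norm_num)
  obtain ⟨B2, hB21, hB2⟩ := hbd 2 (by norm_num) (by norm_num)
  obtain ⟨B3, hB31, hB3⟩ := hbd 3 (by norm_num) (by norm_num)
  set A : ℝ := max B1 (max B2 B3) with hA_def
  have hA1 : 1 ≤ A := le_trans hB11 (le_max_left _ _)
  have hAb : ∀ n : ℕ, 1 ≤ n → n ≤ 3 → ∀ l : ℝ, |Dk χ n l| ≤ A := by
    intro n h1 h3 l
    interval_cases n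
    · exact le_trans (hB1 l) (le_max_left _ _)
    · exact le_trans (hB2 l) (le_trans (le_max_left _ _) (le_max_right _ _))
    · exact le_trans (hB3 l) (le_trans (le_max_right _ _) (le_max_right _ _))
  refine ⟨max (24 * A^2 / lam0^3) (2 + Real.log lam0⁻¹ + 5*A^2), ?_⟩
  intro L M hL hLM k hk
  obtain ⟨Hhigh, Hlow⟩ := main_est hlam0 hlam0' hχ' hχ0 hχ1 hχeq1 hχeq0 hA1 hAb hDz
    L M hL hLM k hk
  have hL0 : (0:ℝ) < L := lt_of_lt_of_le one_pos hL
  have hk0 : (0:ℝ) < |k| := abs_pos.mpr hk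
  have hx : (0:ℝ) < |k| * L := by positivity
  have hrpow : (|k| * L) ^ (-(3:ℝ)) = (((|k| * L))^3)⁻¹ := by
    rw [Real.rpow_neg hx.le, show ((3:ℝ)) = ((3:ℕ):ℝ) by norm_num, Real.rpow_natCast]
  have hj1 : 1 ≤ japR (Real.log (|k| * L)) := by
    unfold japR
    have h := Real.sqrt_le_sqrt (show (1:ℝ) ≤ 1 + (Real.log (|k| * L))^2 by
      nlinarith [sq_nonneg (Real.log (|k| * L))])
    rwa [Real.sqrt_one] at h
  have hj0 : 0 ≤ japR (Real.log (|k| * L)) := le_trans zero_le_one hj1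
  have hq : (0:ℝ) ≤ ((|k| * L)^3)⁻¹ := by positivity
  have hC1 : 24 * A^2 / lam0^3 ≤ max (24 * A^2 / lam0^3) (2 + Real.log lam0⁻¹ + 5*A^2) :=
    le_max_left _ _
  have hC2 : 2 + Real.log lam0⁻¹ + 5*A^2
      ≤ max (24 * A^2 / lam0^3) (2 + Real.log lam0⁻¹ + 5*A^2) := le_max_right _ _
  rw [hrpow]
  rcases le_total (|k| * L) 1 with hle | hge
  · rcases min_cases (japR (Real.log (|k| * L))) (((|k| * L)^3)⁻¹) with ⟨hmineq, _⟩ | ⟨hmineq, _⟩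
    · rw [hmineq]
      exact le_trans (Hlow hle) (mul_le_mul_of_nonneg_right hC2 hj0)
    · rw [hmineq]
      exact le_trans Hhigh (mul_le_mul_of_nonneg_right hC1 hq)
  · have hone : (1:ℝ) ≤ (|k| * L)^3 := one_le_pow₀ hge
    have hminle : ((|k| * L)^3)⁻¹ ≤ 1 := by
      rw [inv_le_one_iff₀]
      right; exact hone
    have hmineq : min (japR (Real.log (|k| * L))) (((|k| * L)^3)⁻¹) = ((|k| * L)^3)⁻¹ :=
      min_eq_right (le_trans hminle hj1)
    rw [hmineq]
    exact le_trans Hhigh (mul_le_mul_of_nonneg_right hC1 hq)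

end
end

section
/- Suppose g : ℝ → ℂ is measurable and satisfies |g(k)| ≤ min( ⟨log|k|⟩, |k|^{−3} ) for all k ≠ 0. Then there is a universal constant C such that for every a ≥ 0: (i) ∫₀^∞ r |g(a + r)| dr ≤ C / ⟨a⟩, and (ii) ∫₀^∞ r |g(a − r)| dr ≤ C ⟨a⟩. -/
/-!
Both sides are controlled by the radial majorant `majorant u = 2 u^(-1/2)` for `u ≤ 1` and
`u^(-3)` for `u > 1`: it dominates `min ⟨log u⟩ u^(-3)` because `1 + |log u| ≤ 2 u^(-1/2)` on
`(0, 1]`, and `u^p · majorant u` is integrable on `(0, ∞)` for `-1/2 < p < 2`.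
For (i), substituting `u = a + r` and using `r ≤ u` bounds the integral by the tail
`∫_a^∞ u · majorant u`, which is at most `7/3`, and equals `1/a` once `a ≥ 1`.
For (ii), `r ≤ a + |a - r|`, so the integral is at most `∫_ℝ (a + |k|) majorant |k| dk`,
which is linear in `a`.
-/

open MeasureTheory Real Set

noncomputable section

lemma japR_le_one_add_abs (t : ℝ) : japR t ≤ 1 + |t| :=
  Real.sqrt_le_iff.mpr ⟨by positivity, by nlinarith [sq_abs t, abs_nonneg t]⟩

lemma one_le_japR (t : ℝ) : 1 ≤ japR t :=
  Real.one_le_sqrt.mpr (by nlinarith [sq_nonneg t])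

lemma abs_le_japR (t : ℝ) : |t| ≤ japR t :=
  Real.abs_le_sqrt (by linarith [sq_nonneg t])

lemma one_sub_log_le_two_mul_rpow_neg_half {u : ℝ} (hu : 0 < u) :
    1 - Real.log u ≤ 2 * u ^ (-(1 / 2) : ℝ) := by
  have h := Real.log_le_sub_one_of_pos (Real.rpow_pos_of_pos hu (-(1 / 2)))
  rw [Real.log_rpow hu] at h
  linarith

def majorant (u : ℝ) : ℝ := if u ≤ 1 then 2 * u ^ (-(1 / 2) : ℝ) else u ^ (-3 : ℝ)

lemma majorant_nonneg {u : ℝ} (hu : 0 ≤ u) : 0 ≤ majorant u := by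
  unfold majorant
  split_ifs <;> positivity

lemma min_japR_log_rpow_le_majorant {u : ℝ} (hu : 0 < u) :
    min (japR (Real.log u)) (u ^ (-(3 : ℝ))) ≤ majorant u := by
  unfold majorant
  split_ifs with h
  · calc min (japR (Real.log u)) (u ^ (-(3 : ℝ))) ≤ 1 + |Real.log u| :=
          (min_le_left _ _).trans (japR_le_one_add_abs _)
      _ = 1 - Real.log u := by rw [abs_of_nonpos (Real.log_nonpos hu.le h), sub_eq_add_neg]
      _ ≤ 2 * u ^ (-(1 / 2) : ℝ) := one_sub_log_le_two_mul_rpow_neg_half hu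
  · exact min_le_right _ _

section RpowMulMajorant

variable {p : ℝ}

lemma rpow_mul_majorant_eqOn_Ioc :
    EqOn (fun u => u ^ p * majorant u) (fun u => 2 * u ^ (p - 1 / 2)) (Ioc 0 1) := by
  intro u hu
  simp only [majorant, if_pos hu.2, sub_eq_add_neg, Real.rpow_add hu.1]
  ring

lemma rpow_mul_majorant_eqOn_Ioi :
    EqOn (fun u => u ^ p * majorant u) (fun u => u ^ (p - 3)) (Ioi 1) := by
  intro u hu
  simp only [majorant, if_neg (not_le.mpr (show (1 : ℝ) < u from hu)), sub_eq_add_neg,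
    Real.rpow_add (zero_lt_one.trans hu)]

lemma integrableOn_Ioc_rpow_mul_majorant (hp : -(1 / 2) < p) :
    IntegrableOn (fun u => u ^ p * majorant u) (Ioc 0 1) := by
  refine IntegrableOn.congr_fun ?_ rpow_mul_majorant_eqOn_Ioc.symm measurableSet_Ioc
  rw [← intervalIntegrable_iff_integrableOn_Ioc_of_le zero_le_one]
  exact (intervalIntegral.intervalIntegrable_rpow' (by linarith)).const_mul 2

lemma integrableOn_Ioi_rpow_mul_majorant (hp : p < 2) :
    IntegrableOn (fun u => u ^ p * majorant u) (Ioi 1) :=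
  (integrableOn_Ioi_rpow_of_lt (by linarith) zero_lt_one).congr_fun
    rpow_mul_majorant_eqOn_Ioi.symm measurableSet_Ioi

lemma integrableOn_rpow_mul_majorant (hp₀ : -(1 / 2) < p) (hp₂ : p < 2) :
    IntegrableOn (fun u => u ^ p * majorant u) (Ioi 0) := by
  rw [← Ioc_union_Ioi_eq_Ioi zero_le_one]
  exact (integrableOn_Ioc_rpow_mul_majorant hp₀).union (integrableOn_Ioi_rpow_mul_majorant hp₂)

lemma integral_rpow_mul_majorant (hp₀ : -(1 / 2) < p) (hp₂ : p < 2) :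
    ∫ u in Ioi 0, u ^ p * majorant u = 2 / (p + 1 / 2) + 1 / (2 - p) := by
  rw [← Ioc_union_Ioi_eq_Ioi zero_le_one, setIntegral_union (Ioc_disjoint_Ioi le_rfl)
      measurableSet_Ioi (integrableOn_Ioc_rpow_mul_majorant hp₀)
      (integrableOn_Ioi_rpow_mul_majorant hp₂),
    setIntegral_congr_fun measurableSet_Ioc rpow_mul_majorant_eqOn_Ioc,
    setIntegral_congr_fun measurableSet_Ioi rpow_mul_majorant_eqOn_Ioi,
    ← intervalIntegral.integral_of_le zero_le_one, intervalIntegral.integral_const_mul,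
    integral_rpow (Or.inl (by linarith)), integral_Ioi_rpow_of_lt (by linarith) zero_lt_one]
  have h₁ : p - 1 / 2 + 1 ≠ 0 := by linarith
  have h₂ : p - 3 + 1 ≠ 0 := by linarith
  have h₃ : p + 1 / 2 ≠ 0 := by linarith
  have h₄ : 2 - p ≠ 0 := by linarith
  rw [Real.one_rpow, Real.one_rpow, Real.zero_rpow h₁]
  field_simp
  ring

end RpowMulMajorant

lemma integrableOn_majorant : IntegrableOn majorant (Ioi 0) := by
  simpa using integrableOn_rpow_mul_majorant (p := 0) (by norm_num) (by norm_num)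

lemma integral_majorant : ∫ u in Ioi 0, majorant u = 9 / 2 := by
  have h := integral_rpow_mul_majorant (p := 0) (by norm_num) (by norm_num)
  norm_num at h
  exact h

lemma integrableOn_mul_majorant : IntegrableOn (fun u => u * majorant u) (Ioi 0) := by
  simpa using integrableOn_rpow_mul_majorant (p := 1) (by norm_num) (by norm_num)

lemma integral_mul_majorant : ∫ u in Ioi 0, u * majorant u = 7 / 3 := by
  have h := integral_rpow_mul_majorant (p := 1) (by norm_num) (by norm_num)
  norm_num at h
  exact h

lemma setIntegral_Ioi_mul_majorant_le {a : ℝ} (ha : 0 ≤ a) :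
    ∫ u in Ioi a, u * majorant u ≤ 5 / (1 + a) := by
  rcases le_or_gt a 1 with ha₁ | ha₁
  · calc ∫ u in Ioi a, u * majorant u ≤ ∫ u in Ioi 0, u * majorant u :=
          setIntegral_mono_set integrableOn_mul_majorant
            (ae_restrict_of_forall_mem measurableSet_Ioi fun u hu =>
              mul_nonneg (le_of_lt hu) (majorant_nonneg (le_of_lt hu)))
            (Ioi_subset_Ioi ha).eventuallyLE
      _ = 7 / 3 := integral_mul_majorant
      _ ≤ 5 / (1 + a) := by rw [le_div_iff₀ (by linarith)]; linarith
  · have htail : EqOn (fun u => u * majorant u) (fun u => u ^ ((1 : ℝ) - 3)) (Ioi a) :=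
      fun u hu => by
        simpa only [Real.rpow_one] using rpow_mul_majorant_eqOn_Ioi (p := 1) (ha₁.trans hu)
    rw [setIntegral_congr_fun measurableSet_Ioi htail,
      integral_Ioi_rpow_of_lt (by norm_num) (by linarith),
      show (1 : ℝ) - 3 + 1 = -1 by norm_num, Real.rpow_neg_one,
      neg_div_neg_eq, div_one, inv_eq_one_div,
      div_le_div_iff₀ (by linarith) (by linarith)]
    linarith

lemma setIntegral_Ioi_comp_const_add {E : Type*} [NormedAddCommGroup E] [NormedSpace ℝ E]
    (f : ℝ → E) (a c : ℝ) : ∫ r in Ioi c, f (a + r) = ∫ u in Ioi (a + c), f u := by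
  rw [← integral_indicator measurableSet_Ioi, ← integral_indicator measurableSet_Ioi,
    ← integral_add_left_eq_self (indicator (Ioi (a + c)) f) a]
  congr 1
  ext r
  simp only [indicator_apply, mem_Ioi, add_lt_add_iff_left]

lemma integrable_comp_abs_of_integrableOn_Ioi {E : Type*} [NormedAddCommGroup E] {f : ℝ → E}
    (hf : IntegrableOn f (Ioi 0)) : Integrable (fun x => f |x|) := by
  have hIoi : IntegrableOn (fun x => f |x|) (Ioi 0) :=
    hf.congr_fun (fun x hx => by rw [abs_of_pos (show (0 : ℝ) < x from hx)]) measurableSet_Ioi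
  have hIic : IntegrableOn (fun x => f |x|) (Iic 0) := by
    have hneg : MeasurableEmbedding fun x : ℝ => -x := (Homeomorph.neg ℝ).measurableEmbedding
    rw [← Measure.map_neg_eq_self (volume : Measure ℝ), hneg.integrableOn_map_iff]
    simp_rw [Function.comp_def, abs_neg, neg_preimage, neg_Iic, neg_zero]
    exact (integrableOn_Ici_iff_integrableOn_Ioi).mpr hIoi
  simpa only [Iic_union_Ioi, integrableOn_univ] using hIic.union hIoi

section Moments

variable {E : Type*} [NormedAddCommGroup E] {f : ℝ → E}

lemma integral_mul_norm_comp_const_add_le (hf : ∀ k ≠ 0, ‖f k‖ ≤ majorant |k|) {a : ℝ}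
    (ha : 0 ≤ a) : ∫ r in Ioi 0, r * ‖f (a + r)‖ ≤ 5 / (1 + a) := by
  have hbound : ∀ u ∈ Ioi a, (u - a) * ‖f u‖ ≤ u * majorant u := fun u hu => by
    have hu : 0 < u := ha.trans_lt hu
    have h := hf u hu.ne'
    rw [abs_of_pos hu] at h
    exact mul_le_mul (by linarith) h (norm_nonneg _) hu.le
  calc ∫ r in Ioi 0, r * ‖f (a + r)‖ = ∫ u in Ioi a, (u - a) * ‖f u‖ := by
        simpa using setIntegral_Ioi_comp_const_add (fun u => (u - a) * ‖f u‖) a 0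
    _ ≤ ∫ u in Ioi a, u * majorant u :=
        integral_mono_of_nonneg
          (ae_restrict_of_forall_mem measurableSet_Ioi fun u hu =>
            mul_nonneg (sub_nonneg.mpr (le_of_lt hu)) (norm_nonneg _))
          (integrableOn_mul_majorant.mono_set (Ioi_subset_Ioi ha))
          (ae_restrict_of_forall_mem measurableSet_Ioi hbound)
    _ ≤ 5 / (1 + a) := setIntegral_Ioi_mul_majorant_le ha

lemma integral_mul_norm_comp_const_sub_le (hf : ∀ k ≠ 0, ‖f k‖ ≤ majorant |k|) {a : ℝ}
    (ha : 0 ≤ a) : ∫ r in Ioi 0, r * ‖f (a - r)‖ ≤ 9 * a + 14 / 3 := by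
  set h : ℝ → ℝ := fun u => (a + u) * majorant u
  have h_eq : h = fun u => a * majorant u + u * majorant u := by
    funext u
    ring
  have h_int : IntegrableOn h (Ioi 0) := by
    rw [h_eq]
    exact (integrableOn_majorant.const_mul a).add integrableOn_mul_majorant
  have h_abs_int : Integrable fun r => h |a - r| :=
    (integrable_comp_abs_of_integrableOn_Ioi h_int).comp_sub_left a
  have hbound : ∀ r, r ≠ a → r * ‖f (a - r)‖ ≤ h |a - r| := fun r hr =>
    mul_le_mul (by linarith [neg_abs_le (a - r)]) (hf _ (sub_ne_zero.mpr hr.symm))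
      (norm_nonneg _) (add_nonneg ha (abs_nonneg _))
  calc ∫ r in Ioi 0, r * ‖f (a - r)‖ ≤ ∫ r in Ioi 0, h |a - r| :=
        integral_mono_of_nonneg
          (ae_restrict_of_forall_mem measurableSet_Ioi fun r hr =>
            mul_nonneg (le_of_lt hr) (norm_nonneg _))
          h_abs_int.integrableOn
          (ae_restrict_of_ae ((Measure.ae_ne volume a).mono hbound))
    _ ≤ ∫ r, h |a - r| :=
        setIntegral_le_integral h_abs_int (.of_forall fun r =>
          mul_nonneg (add_nonneg ha (abs_nonneg _)) (majorant_nonneg (abs_nonneg _)))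
    _ = 2 * ∫ u in Ioi 0, h u := by
        rw [integral_sub_left_eq_self (fun x => h |x|), integral_comp_abs]
    _ = 9 * a + 14 / 3 := by
        rw [h_eq, integral_add (integrableOn_majorant.const_mul a) integrableOn_mul_majorant,
          integral_const_mul, integral_majorant, integral_mul_majorant]
        ring

end Moments

theorem stmt15 :
    ∃ C : ℝ, ∀ g : ℝ → ℂ, Measurable g →
      (∀ k : ℝ, k ≠ 0 → ‖g k‖ ≤ min (japR (Real.log |k|)) (|k| ^ (-(3 : ℝ)))) →
      ∀ a : ℝ, 0 ≤ a →
        (∫ r in Set.Ioi (0 : ℝ), r * ‖g (a + r)‖) ≤ C / japR a ∧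
        (∫ r in Set.Ioi (0 : ℝ), r * ‖g (a - r)‖) ≤ C * japR a := by
  refine ⟨14, fun g _ hg a ha => ?_⟩
  have hg' : ∀ k ≠ 0, ‖g k‖ ≤ majorant |k| := fun k hk =>
    (hg k hk).trans (min_japR_log_rpow_le_majorant (abs_pos.mpr hk))
  constructor
  · have hjap : japR a ≤ 1 + a := by simpa [abs_of_nonneg ha] using japR_le_one_add_abs a
    calc ∫ r in Ioi 0, r * ‖g (a + r)‖ ≤ 5 / (1 + a) :=
          integral_mul_norm_comp_const_add_le hg' ha
      _ ≤ 14 / japR a := by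
          rw [div_le_div_iff₀ (by linarith) (by linarith [one_le_japR a])]
          linarith
  · have hjap : a ≤ japR a := by simpa [abs_of_nonneg ha] using abs_le_japR a
    calc ∫ r in Ioi 0, r * ‖g (a - r)‖ ≤ 9 * a + 14 / 3 :=
          integral_mul_norm_comp_const_sub_le hg' ha
      _ ≤ 14 * japR a := by linarith [one_le_japR a]
end
end

section
/- For λ > 0 and r > 0, let F(λ, r) = (e^{iλr} − e^{−λr}) / (8π λ² r), which is the kernel (at points with |x−y| = r) of the free fourth-order resolvent R⁺(λ⁴) = (Δ² − (λ⁴ + i0))^{−1} on ℝ³. Define the remainder E(λ, r) := F(λ, r) − (1+i)/(8πλ) + r/(8π) − (1−i) λ r² / (48π). Then there is a constant C such that whenever 0 < λ r < 1, for each j = 0, 1, 2, |∂_λ^j E(λ, r)| ≤ C λ^{2−j} r³. -/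
/-!
Write `N(w) = e^{iw} - e^{-w} - (1+i)w + w² - (1-i)w³/6`. Then `E(λ, r) = r · E(λr, 1)` and
`E(w, 1) = N(w) / (8π w²)`, so `∂_λ^j E(λ, r) = r^{j+1} · (∂_w^j E)(λr, 1)`, and it suffices to
show `|∂_w^j E(w, 1)| ≤ w^{2-j}` for `0 < w ≤ 1`. The derivatives `N^{(j)}` are differences of
tails of the exponential series at `iw` and `-w`, starting at degree `4 - j`, hence
`|N^{(j)}(w)| ≤ 2 w^{4-j}`; by the quotient rule, `∂_w^j E(w, 1)` is a combination of
`w^k N^{(k)}(w)` divided by `8π w^{j+2}`.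
-/

open Real Complex

noncomputable section

/-- The kernel of the free fourth-order resolvent at radius `r`:
`F(λ, r) = (e^{iλr} − e^{−λr}) / (8π λ² r)`. -/
def resKer (l r : ℝ) : ℂ :=
  (Complex.exp (Complex.I * l * r) - Complex.exp (-(l : ℂ) * r)) / (8 * Real.pi * l ^ 2 * r)

/-- The remainder `E(λ, r)` after subtracting the first terms of the expansion. -/
def resRem (l r : ℝ) : ℂ :=
  resKer l r - (1 + Complex.I) / (8 * Real.pi * l) + (r : ℂ) / (8 * Real.pi) -
    (1 - Complex.I) * l * r ^ 2 / (48 * Real.pi)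

open Finset Nat

def expTail (n : ℕ) (z : ℂ) : ℂ := exp z - ∑ m ∈ range n, z ^ m / m !

theorem hasDerivAt_expTail_succ (n : ℕ) (z : ℂ) :
    HasDerivAt (expTail (n + 1)) (expTail n z) z := by
  have hterm : ∀ m : ℕ, HasDerivAt (fun z : ℂ => z ^ (m + 1) / (m + 1)!) (z ^ m / m !) z := by
    intro m
    refine ((hasDerivAt_pow (m + 1) z).div_const ((m + 1)! : ℂ)).congr_deriv ?_
    rw [Nat.factorial_succ]
    push_cast
    field_simp
  have hsum := HasDerivAt.fun_sum (u := range n) fun m _ => hterm m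
  unfold expTail
  simp only [sum_range_succ' _ n, pow_zero, Nat.factorial_zero, Nat.cast_one, div_one]
  exact (hasDerivAt_exp z).sub (hsum.add_const 1)

theorem hasDerivAt_expTail_succ_const_mul (n : ℕ) (c : ℂ) (w : ℝ) :
    HasDerivAt (fun w : ℝ => expTail (n + 1) (c * w)) (c * expTail n (c * w)) w := by
  simpa [mul_comm c] using
    ((hasDerivAt_expTail_succ n (c * w)).comp (w : ℂ) ((hasDerivAt_id _).const_mul c)).comp_ofReal

theorem norm_expTail_le {n : ℕ} (hn : 2 ≤ n) {z : ℂ} (hz : ‖z‖ ≤ 1) :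
    ‖expTail n z‖ ≤ ‖z‖ ^ n := by
  have hfac : (n + 1 : ℝ) ≤ n ! * n := by
    have := Nat.self_le_factorial n
    exact_mod_cast (by nlinarith : n + 1 ≤ n ! * n)
  calc ‖expTail n z‖ ≤ ‖z‖ ^ n * ((n.succ : ℝ) * (n ! * n : ℝ)⁻¹) := exp_bound hz (by omega)
    _ ≤ ‖z‖ ^ n * 1 := by
        gcongr
        push_cast
        rw [mul_inv_le_iff₀ (by positivity)]
        linarith
    _ = ‖z‖ ^ n := mul_one _

/-- `expTailDiff j = N^{(j)}` for `j ≤ 4`. -/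
def expTailDiff (j : ℕ) (w : ℝ) : ℂ :=
  I ^ j * expTail (4 - j) (I * w) - (-1) ^ j * expTail (4 - j) (-1 * w)

theorem hasDerivAt_expTailDiff {j : ℕ} (hj : j < 4) (w : ℝ) :
    HasDerivAt (expTailDiff j) (expTailDiff (j + 1) w) w := by
  have hsucc : 4 - j = 4 - (j + 1) + 1 := by omega
  unfold expTailDiff
  rw [hsucc]
  refine (((hasDerivAt_expTail_succ_const_mul _ I w).const_mul (I ^ j)).sub
    ((hasDerivAt_expTail_succ_const_mul _ (-1) w).const_mul ((-1) ^ j))).congr_deriv ?_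
  ring

theorem norm_expTailDiff_le {j : ℕ} (hj : j ≤ 2) {w : ℝ} (hw : |w| ≤ 1) :
    ‖expTailDiff j w‖ ≤ 2 * |w| ^ (4 - j) := by
  have hI : ‖I * w‖ = |w| := by simp
  have hneg : ‖-1 * (w : ℂ)‖ = |w| := by simp
  have h1 := norm_expTail_le (n := 4 - j) (by omega) (hI ▸ hw)
  have h2 := norm_expTail_le (n := 4 - j) (by omega) (hneg ▸ hw)
  rw [hI] at h1
  rw [hneg] at h2
  calc ‖expTailDiff j w‖
      ≤ ‖I ^ j * expTail (4 - j) (I * w)‖ + ‖(-1) ^ j * expTail (4 - j) (-1 * w)‖ :=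
        norm_sub_le _ _
    _ ≤ |w| ^ (4 - j) + |w| ^ (4 - j) := by simpa using add_le_add h1 h2
    _ = 2 * |w| ^ (4 - j) := by ring

/-- Numerators of the derivatives of `w ↦ N(w) / w²`, from the quotient rule. -/
def remDerivNum : ℕ → ℝ → ℂ
  | 0, w => expTailDiff 0 w
  | 1, w => w * expTailDiff 1 w - 2 * expTailDiff 0 w
  | 2, w => w ^ 2 * expTailDiff 2 w - 4 * w * expTailDiff 1 w + 6 * expTailDiff 0 w
  | _, _ => 0

/-- For `j ≤ 2` and `w ≠ 0`, the `j`-th derivative of `w ↦ resRem w 1`. -/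
def remDeriv (j : ℕ) (w : ℝ) : ℂ := remDerivNum j w / (8 * π * w ^ (j + 2))

theorem resRem_eq_mul_resRem_one (t : ℝ) {r : ℝ} (hr : r ≠ 0) :
    resRem t r = r * resRem (t * r) 1 := by
  have hr' : (r : ℂ) ≠ 0 := ofReal_ne_zero.2 hr
  have hπ : (π : ℂ) ≠ 0 := ofReal_ne_zero.2 pi_ne_zero
  rcases eq_or_ne t 0 with rfl | ht
  · simp [resRem, resKer]
    ring
  · have ht' : (t : ℂ) ≠ 0 := ofReal_ne_zero.2 ht
    simp only [resRem, resKer]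
    push_cast
    field_simp

theorem resRem_one_eq_remDeriv_zero {w : ℝ} (hw : w ≠ 0) : resRem w 1 = remDeriv 0 w := by
  have hw' : (w : ℂ) ≠ 0 := ofReal_ne_zero.2 hw
  have hπ : (π : ℂ) ≠ 0 := ofReal_ne_zero.2 pi_ne_zero
  simp only [resRem, resKer, remDeriv, remDerivNum, expTailDiff, expTail, sum_range_succ,
    sum_range_zero, ofReal_one, mul_one, one_pow]
  field_simp
  ring_nf
  simp only [I_sq, I_pow_three]
  ring

theorem hasDerivAt_div_const_mul_pow {f : ℝ → ℂ} {f' : ℂ} {w : ℝ} (hf : HasDerivAt f f' w)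
    (hw : w ≠ 0) (k : ℕ) {c : ℂ} (hc : c ≠ 0) :
    HasDerivAt (fun w : ℝ => f w / (c * w ^ k)) ((w * f' - k * f w) / (c * w ^ (k + 1))) w := by
  have hw' : (w : ℂ) ≠ 0 := ofReal_ne_zero.2 hw
  have hden : HasDerivAt (fun w : ℝ => c * (w : ℂ) ^ k) (c * (k * (w : ℂ) ^ (k - 1))) w :=
    ((hasDerivAt_pow k (w : ℂ)).const_mul c).comp_ofReal
  refine (hf.div hden (by simp [hc, hw'])).congr_deriv ?_
  rcases k with _ | k
  · simp
    field_simp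
  · simp only [Nat.add_sub_cancel]
    field_simp
    ring

theorem hasDerivAt_remDeriv {j : ℕ} (hj : j < 2) {w : ℝ} (hw : w ≠ 0) :
    HasDerivAt (remDeriv j) (remDeriv (j + 1) w) w := by
  have h0 := hasDerivAt_expTailDiff (j := 0) (by norm_num) w
  have h1 := hasDerivAt_expTailDiff (j := 1) (by norm_num) w
  have hid : HasDerivAt (fun w : ℝ => (w : ℂ)) 1 w := (hasDerivAt_id (w : ℂ)).comp_ofReal
  have h8π : (8 * π : ℂ) ≠ 0 := by simp [pi_ne_zero]
  interval_cases j
  · exact (hasDerivAt_div_const_mul_pow h0 hw 2 h8π).congr_deriv (by simp [remDeriv, remDerivNum])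
  · refine (hasDerivAt_div_const_mul_pow ((hid.mul h1).sub (h0.const_mul 2)) hw 3 h8π).congr_deriv ?_
    simp only [remDeriv, remDerivNum, Pi.mul_apply, Pi.sub_apply]
    push_cast
    ring

theorem norm_remDerivNum_le {j : ℕ} (hj : j ≤ 2) {w : ℝ} (hw : |w| ≤ 1) :
    ‖remDerivNum j w‖ ≤ 24 * |w| ^ 4 := by
  have h0 : ‖expTailDiff 0 w‖ ≤ 2 * |w| ^ 4 := norm_expTailDiff_le (by norm_num) hw
  have h1 : ‖expTailDiff 1 w‖ ≤ 2 * |w| ^ 3 := norm_expTailDiff_le (by norm_num) hw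
  have h2 : ‖expTailDiff 2 w‖ ≤ 2 * |w| ^ 2 := norm_expTailDiff_le (by norm_num) hw
  have hw0 := abs_nonneg w
  interval_cases j <;> simp only [remDerivNum]
  · linarith [pow_nonneg hw0 4]
  · calc _ ≤ |w| * ‖expTailDiff 1 w‖ + 2 * ‖expTailDiff 0 w‖ := by
          refine (norm_sub_le _ _).trans ?_
          simp
      _ ≤ |w| * (2 * |w| ^ 3) + 2 * (2 * |w| ^ 4) := by gcongr
      _ ≤ 24 * |w| ^ 4 := by nlinarith [pow_nonneg hw0 4]
  · calc _ ≤ |w| ^ 2 * ‖expTailDiff 2 w‖ + 4 * |w| * ‖expTailDiff 1 w‖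
            + 6 * ‖expTailDiff 0 w‖ := by
          refine (norm_add_le _ _).trans
            (add_le_add ((norm_sub_le _ _).trans (le_of_eq ?_)) (le_of_eq ?_)) <;> simp
      _ ≤ |w| ^ 2 * (2 * |w| ^ 2) + 4 * |w| * (2 * |w| ^ 3) + 6 * (2 * |w| ^ 4) := by gcongr
      _ ≤ 24 * |w| ^ 4 := by nlinarith [pow_nonneg hw0 4]

theorem norm_remDeriv_le {j : ℕ} (hj : j ≤ 2) {w : ℝ} (hw0 : w ≠ 0) (hw : |w| ≤ 1) :
    ‖remDeriv j w‖ ≤ |w| ^ (2 - j) := by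
  have hpos : 0 < |w| := abs_pos.2 hw0
  rw [remDeriv, norm_div, div_le_iff₀ (by simp [hw0, pi_ne_zero])]
  calc ‖remDerivNum j w‖ ≤ 24 * |w| ^ 4 := norm_remDerivNum_le hj hw
    _ = 24 * (|w| ^ (2 - j) * |w| ^ (j + 2)) := by rw [← pow_add]; congr 2; omega
    _ ≤ |w| ^ (2 - j) * ‖8 * (π : ℂ) * w ^ (j + 2)‖ := by
        simp only [norm_mul, norm_pow, norm_real, Complex.norm_ofNat, Real.norm_eq_abs,
          abs_of_pos pi_pos]
        have := mul_pos (pow_pos hpos (2 - j)) (pow_pos hpos (j + 2))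
        nlinarith [pi_gt_three]

theorem iteratedDeriv_eq_of_hasDerivAt {𝕜 F : Type*} [NontriviallyNormedField 𝕜]
    [NormedAddCommGroup F] [NormedSpace 𝕜 F] {s : Set 𝕜} (hs : IsOpen s) {g : 𝕜 → F}
    {f : ℕ → 𝕜 → F} {n : ℕ} (hg : Set.EqOn g (f 0) s)
    (hf : ∀ k < n, ∀ x ∈ s, HasDerivAt (f k) (f (k + 1) x) x) :
    ∀ k ≤ n, ∀ x ∈ s, iteratedDeriv k g x = f k x := by
  intro k
  induction k with
  | zero => exact fun _ x hx => hg hx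
  | succ k ih =>
    intro hk x hx
    have hloc : iteratedDeriv k g =ᶠ[nhds x] f k :=
      Filter.eventually_of_mem (hs.mem_nhds hx) fun y hy => ih (by omega) y hy
    rw [iteratedDeriv_succ, hloc.deriv_eq, (hf k (by omega) x hx).deriv]

theorem stmt17 :
    ∃ C : ℝ, ∀ (l r : ℝ), 0 < l → 0 < r → l * r < 1 → ∀ j : ℕ, j ≤ 2 →
      ‖iteratedDeriv j (fun t : ℝ => resRem t r) l‖ ≤ C * l ^ (2 - j) * r ^ 3 := by
  refine ⟨1, fun l r hl hr hlr j hj => ?_⟩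
  set f : ℕ → ℝ → ℂ := fun k t => (r : ℂ) ^ (k + 1) * remDeriv k (t * r)
  have hf0 : Set.EqOn (fun t => resRem t r) (f 0) (Set.Ioi 0) := fun t ht => by
    simp [f, resRem_eq_mul_resRem_one t hr.ne', resRem_one_eq_remDeriv_zero (mul_pos ht hr).ne']
  have hf : ∀ k < 2, ∀ t ∈ Set.Ioi (0 : ℝ), HasDerivAt (f k) (f (k + 1) t) t := by
    intro k hk t ht
    refine (((hasDerivAt_remDeriv hk (mul_pos ht hr).ne').scomp t
      (hasDerivAt_mul_const r)).const_mul ((r : ℂ) ^ (k + 1))).congr_deriv ?_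
    simp only [f, real_smul]
    ring
  rw [iteratedDeriv_eq_of_hasDerivAt isOpen_Ioi hf0 hf j hj l hl]
  have hlr0 : 0 < l * r := mul_pos hl hr
  calc ‖f j l‖ = r ^ (j + 1) * ‖remDeriv j (l * r)‖ := by simp [f, abs_of_pos hr]
    _ ≤ r ^ (j + 1) * (l * r) ^ (2 - j) := by
        gcongr
        simpa [abs_of_pos hlr0] using
          norm_remDeriv_le hj hlr0.ne' (by rw [abs_of_pos hlr0]; exact hlr.le)
    _ = 1 * l ^ (2 - j) * r ^ 3 := by
        rw [mul_pow, one_mul, mul_left_comm, ← pow_add, show j + 1 + (2 - j) = 3 by omega]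
end
end

section
/- Let β > 9/2 and let v : ℝ³ → [0, ∞) be measurable with v(z) ≤ ⟨z⟩^{−β} for all z. Let K : ℝ³ × ℝ³ → ℂ be measurable and suppose the operator with kernel |K(z,w)| is bounded on L²(ℝ³) with norm at most M, i.e. ∫∫_{ℝ⁶} |K(z,w)| f(z) g(w) dz dw ≤ M ‖f‖_{L²} ‖g‖_{L²} for all nonnegative f, g ∈ L²(ℝ³). Then there is a constant C, depending only on β, such that for all x, y ∈ ℝ³, ∫∫_{ℝ⁶} ⟨z⟩³ v(z) |K(z,w)| v(w) ⟨w⟩³ / ( min(⟨x⟩, |x−z|) · min(⟨y⟩, |w−y|) ) dz dw ≤ C M / (⟨x⟩ ⟨y⟩). -/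
/-!
Write `f_x z = ⟨z⟩³ v z / min ⟨x⟩ |x - z|`. The integrand is `|K z w| f_x z f_y w`, so the
boundedness of `|K|` reduces the claim to `‖f_x‖_{L²} ≲ ⟨x⟩⁻¹`, i.e. to
`∫ ⟨z⟩^γ / min ⟨x⟩ |x - z|² dz ≲ ⟨x⟩⁻²` with `γ = 6 - 2β < -3`. Outside the ball
`B(x, ⟨x⟩/2)` the denominator is at least `⟨x⟩²/4` and `⟨z⟩^γ` is integrable. Inside it
`⟨z⟩ ≥ ⟨x⟩/2` and, in polar coordinates, `∫_{B(x,r)} |x - z|⁻² dz = 4πr`; this gives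
`⟨x⟩^(γ+1) ≤ ⟨x⟩⁻²`, which is exactly where `β > 9/2` is needed.
-/

open MeasureTheory Real Set

noncomputable section

abbrev E3 := EuclideanSpace ℝ (Fin 3)

/-- Japanese bracket on ℝ³. -/
def jap (x : E3) : ℝ := Real.sqrt (1 + ‖x‖ ^ 2)

open Metric Module

theorem memLp_two_and_eLpNorm_le_of_sq_le {α : Type*} [MeasurableSpace α] {μ : Measure α}
    {f G : α → ℝ} {B : ℝ} (hB : 0 ≤ B) (hf : AEStronglyMeasurable f μ) (hfG : ∀ a, f a ^ 2 ≤ G a)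
    (hG : ∫⁻ a, ENNReal.ofReal (G a) ∂μ ≤ ENNReal.ofReal B) :
    MemLp f 2 μ ∧ (eLpNorm f 2 μ).toReal ≤ √B := by
  have hle : eLpNorm f 2 μ ≤ ENNReal.ofReal √B := by
    rw [eLpNorm_eq_lintegral_rpow_enorm_toReal two_ne_zero ENNReal.ofNat_ne_top,
      sqrt_eq_rpow, ← ENNReal.ofReal_rpow_of_nonneg hB (by norm_num)]
    refine ENNReal.rpow_le_rpow (le_trans (lintegral_mono fun a => ?_) hG) (by norm_num)
    rw [← ofReal_norm, ENNReal.toReal_ofNat,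
      ENNReal.ofReal_rpow_of_nonneg (norm_nonneg _) (by norm_num)]
    exact ENNReal.ofReal_le_ofReal (by simpa using hfG a)
  exact ⟨⟨hf, hle.trans_lt ENNReal.ofReal_lt_top⟩,
    ENNReal.toReal_le_of_le_ofReal (sqrt_nonneg B) hle⟩

section Polar

variable {E : Type*} [NormedAddCommGroup E] [NormedSpace ℝ E] [FiniteDimensional ℝ E]
  [MeasurableSpace E] [BorelSpace E] [Nontrivial E] (μ : Measure E) [μ.IsAddHaarMeasure]

theorem integrableOn_ball_inv_norm_pow_finrank_sub_one (R : ℝ) :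
    IntegrableOn (fun u : E => (‖u‖ ^ (finrank ℝ E - 1))⁻¹) (ball 0 R) μ := by
  rw [integrableOn_fun_norm_addHaar μ (f := fun y => (y ^ (finrank ℝ E - 1))⁻¹)]
  refine (integrableOn_const (C := (1 : ℝ)) measure_Ioo_lt_top.ne).congr_fun
    (fun y (hy : y ∈ Ioo 0 R) => ?_) measurableSet_Ioo
  simp [mul_inv_cancel₀ (pow_pos hy.1 _).ne']

theorem integral_ball_inv_norm_pow_finrank_sub_one {R : ℝ} (hR : 0 ≤ R) :
    ∫ u in ball 0 R, (‖u‖ ^ (finrank ℝ E - 1))⁻¹ ∂μ = finrank ℝ E * μ.real (ball 0 1) * R := by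
  have hind : (ball (0 : E) R).indicator (fun u => (‖u‖ ^ (finrank ℝ E - 1))⁻¹) =
      fun u => (Iio R).indicator (fun y : ℝ => (y ^ (finrank ℝ E - 1))⁻¹) ‖u‖ := by
    ext u; simp [indicator]
  have hradial : ∫ y in Ioi (0 : ℝ), y ^ (finrank ℝ E - 1) •
      (Iio R).indicator (fun y : ℝ => (y ^ (finrank ℝ E - 1))⁻¹) y = R := by
    calc _ = ∫ y in Ioi (0 : ℝ), (Iio R).indicator 1 y := by
          refine setIntegral_congr_fun measurableSet_Ioi fun y (hy : 0 < y) => ?_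
          by_cases hyR : y < R <;> simp [hyR, mul_inv_cancel₀ (pow_pos hy _).ne']
      _ = R := by
          rw [integral_indicator measurableSet_Iio, Measure.restrict_restrict measurableSet_Iio]
          simp [Iio_inter_Ioi, hR]
  rw [← integral_indicator measurableSet_ball, hind, integral_fun_norm_addHaar μ, hradial]
  simp [nsmul_eq_mul, mul_assoc]

end Polar

theorem lintegral_ball_inv_norm_sub_sq (x : E3) {r : ℝ} (hr : 0 ≤ r) :
    ∫⁻ z in ball x r, ENNReal.ofReal (‖x - z‖ ^ 2)⁻¹ =
      ENNReal.ofReal (3 * volume.real (ball (0 : E3) 1) * r) := by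
  have hint := integrableOn_ball_inv_norm_pow_finrank_sub_one (volume : Measure E3) r
  have hval := integral_ball_inv_norm_pow_finrank_sub_one (volume : Measure E3) hr
  simp only [finrank_euclideanSpace_fin, Nat.cast_ofNat, Nat.add_one_sub_one] at hint hval
  have hpre : (x - ·) ⁻¹' ball (0 : E3) r = ball x r := by
    ext z; simp [dist_eq_norm, norm_sub_rev]
  rw [← hpre, (Measure.measurePreserving_sub_left volume x).setLIntegral_comp_preimage_emb
    (Homeomorph.subLeft x).measurableEmbedding (fun u => ENNReal.ofReal (‖u‖ ^ 2)⁻¹),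
    ← ofReal_integral_eq_lintegral_ofReal hint (ae_of_all _ fun u => by positivity), hval]

theorem one_le_jap (x : E3) : 1 ≤ jap x :=
  Real.one_le_sqrt.mpr (by nlinarith [sq_nonneg ‖x‖])

theorem jap_pos (x : E3) : 0 < jap x := one_pos.trans_le (one_le_jap x)

@[fun_prop]
theorem continuous_jap : Continuous jap := by unfold jap; fun_prop

theorem jap_rpow (x : E3) (γ : ℝ) : jap x ^ γ = (1 + ‖x‖ ^ 2) ^ (γ / 2) := by
  rw [jap, sqrt_eq_rpow, ← rpow_mul (by positivity), one_div_mul_eq_div]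

theorem integrable_jap_rpow {γ : ℝ} (hγ : γ < -3) : Integrable (fun x => jap x ^ γ) := by
  have := integrable_rpow_neg_one_add_norm_sq (E := E3) (μ := volume) (r := -γ)
    (by rw [finrank_euclideanSpace_fin]; push_cast; linarith)
  simpa [jap_rpow] using this

theorem jap_le_jap_add_norm_sub (x z : E3) : jap x ≤ jap z + ‖x - z‖ := by
  have hx : ‖x‖ ≤ ‖z‖ + ‖x - z‖ := norm_le_norm_add_norm_sub' x z
  have hz : ‖z‖ ≤ jap z :=
    (sqrt_sq (norm_nonneg z)).symm.le.trans (sqrt_le_sqrt (by linarith))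
  have hz2 : jap z ^ 2 = 1 + ‖z‖ ^ 2 := sq_sqrt (by positivity)
  refine sqrt_le_iff.mpr ⟨by linarith [jap_pos z, norm_nonneg (x - z)], ?_⟩
  nlinarith [norm_nonneg x, norm_nonneg z, norm_nonneg (x - z)]

theorem setLIntegral_compl_ball_jap_rpow_div_min_sq_le {γ : ℝ} (hγ : γ < -3) (x : E3) :
    ∫⁻ z in (ball x (jap x / 2))ᶜ, ENNReal.ofReal (jap z ^ γ / min (jap x) ‖x - z‖ ^ 2) ≤
      ENNReal.ofReal (4 * (∫ z, jap z ^ γ) / jap x ^ 2) := by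
  have ha := jap_pos x
  have hpt : ∀ z ∈ (ball x (jap x / 2))ᶜ,
      jap z ^ γ / min (jap x) ‖x - z‖ ^ 2 ≤ 4 / jap x ^ 2 * jap z ^ γ := by
    intro z hz
    have hfar : jap x / 2 ≤ ‖x - z‖ := by simpa [dist_eq_norm, norm_sub_rev] using hz
    have hmin : (jap x / 2) ^ 2 ≤ min (jap x) ‖x - z‖ ^ 2 :=
      pow_le_pow_left₀ (by positivity) (le_min (by linarith) hfar) 2
    calc jap z ^ γ / min (jap x) ‖x - z‖ ^ 2 ≤ jap z ^ γ / (jap x / 2) ^ 2 :=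
          div_le_div_of_nonneg_left (rpow_nonneg (jap_pos z).le _) (by positivity) hmin
      _ = 4 / jap x ^ 2 * jap z ^ γ := by ring
  calc _ ≤ ∫⁻ z in (ball x (jap x / 2))ᶜ, ENNReal.ofReal (4 / jap x ^ 2 * jap z ^ γ) :=
        setLIntegral_mono' measurableSet_ball.compl fun z hz =>
          ENNReal.ofReal_le_ofReal (hpt z hz)
    _ ≤ ∫⁻ z, ENNReal.ofReal (4 / jap x ^ 2 * jap z ^ γ) := setLIntegral_le_lintegral _ _
    _ = ENNReal.ofReal (4 * (∫ z, jap z ^ γ) / jap x ^ 2) := by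
        rw [← ofReal_integral_eq_lintegral_ofReal ((integrable_jap_rpow hγ).const_mul _)
          (ae_of_all _ fun z => mul_nonneg (by positivity) (rpow_nonneg (jap_pos z).le _)),
          integral_const_mul]
        ring_nf

theorem setLIntegral_ball_jap_rpow_div_min_sq_le {γ : ℝ} (hγ : γ ≤ -3) (x : E3) :
    ∫⁻ z in ball x (jap x / 2), ENNReal.ofReal (jap z ^ γ / min (jap x) ‖x - z‖ ^ 2) ≤
      ENNReal.ofReal (3 * volume.real (ball (0 : E3) 1) / 2 ^ (γ + 1) / jap x ^ 2) := by
  have ha := jap_pos x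
  have hpt : ∀ z ∈ ball x (jap x / 2),
      jap z ^ γ / min (jap x) ‖x - z‖ ^ 2 ≤ (jap x / 2) ^ γ * (‖x - z‖ ^ 2)⁻¹ := by
    intro z hz
    have hnear : ‖x - z‖ < jap x / 2 := by simpa [dist_eq_norm, norm_sub_rev] using hz
    have hjz : jap x / 2 ≤ jap z := by linarith [jap_le_jap_add_norm_sub x z]
    rw [min_eq_right (show ‖x - z‖ ≤ jap x by linarith), div_eq_mul_inv]
    exact mul_le_mul_of_nonneg_right (rpow_le_rpow_of_nonpos (by positivity) hjz (by linarith))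
      (by positivity)
  have hdecay : (jap x / 2) ^ γ * (jap x / 2) ≤ 1 / 2 ^ (γ + 1) / jap x ^ 2 :=
    calc (jap x / 2) ^ γ * (jap x / 2) = jap x ^ (γ + 1) / 2 ^ (γ + 1) := by
          rw [← rpow_add_one (by positivity), div_rpow ha.le zero_le_two]
      _ ≤ jap x ^ (-2 : ℝ) / 2 ^ (γ + 1) := by
          gcongr
          exacts [one_le_jap x, by linarith]
      _ = 1 / 2 ^ (γ + 1) / jap x ^ 2 := by rw [rpow_neg ha.le, rpow_two]; ring
  calc _ ≤ ∫⁻ z in ball x (jap x / 2),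
        ENNReal.ofReal ((jap x / 2) ^ γ) * ENNReal.ofReal (‖x - z‖ ^ 2)⁻¹ :=
        setLIntegral_mono' measurableSet_ball fun z hz => by
          rw [← ENNReal.ofReal_mul (by positivity)]
          exact ENNReal.ofReal_le_ofReal (hpt z hz)
    _ = ENNReal.ofReal ((jap x / 2) ^ γ) *
          ENNReal.ofReal (3 * volume.real (ball (0 : E3) 1) * (jap x / 2)) := by
        rw [lintegral_const_mul' _ _ ENNReal.ofReal_ne_top,
          lintegral_ball_inv_norm_sub_sq x (by positivity)]
    _ ≤ _ := by
        rw [← ENNReal.ofReal_mul (by positivity)]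
        refine ENNReal.ofReal_le_ofReal ?_
        calc _ = 3 * volume.real (ball (0 : E3) 1) * ((jap x / 2) ^ γ * (jap x / 2)) := by ring
          _ ≤ 3 * volume.real (ball (0 : E3) 1) * (1 / 2 ^ (γ + 1) / jap x ^ 2) := by gcongr
          _ = _ := by ring

theorem exists_lintegral_jap_rpow_div_min_sq_le {γ : ℝ} (hγ : γ < -3) :
    ∃ D : ℝ, 0 ≤ D ∧ ∀ x : E3,
      ∫⁻ z, ENNReal.ofReal (jap z ^ γ / min (jap x) ‖x - z‖ ^ 2) ≤
        ENNReal.ofReal (D / jap x ^ 2) := by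
  have hI : 0 ≤ ∫ z, jap z ^ γ := integral_nonneg fun z => rpow_nonneg (jap_pos z).le γ
  refine ⟨4 * (∫ z, jap z ^ γ) + 3 * volume.real (ball (0 : E3) 1) / 2 ^ (γ + 1),
    add_nonneg (by positivity) (by positivity), fun x => ?_⟩
  rw [← lintegral_add_compl _ (measurableSet_ball (x := x) (ε := jap x / 2)), add_comm, add_div,
    ENNReal.ofReal_add (by positivity) (by positivity)]
  exact add_le_add (setLIntegral_compl_ball_jap_rpow_div_min_sq_le hγ x)
    (setLIntegral_ball_jap_rpow_div_min_sq_le hγ.le x)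

theorem sq_jap_pow_three_mul_div_le {β v : ℝ} {z : E3} (hv0 : 0 ≤ v) (hv : v ≤ jap z ^ (-β))
    (m : ℝ) : (jap z ^ 3 * v / m) ^ 2 ≤ jap z ^ (6 - 2 * β) / m ^ 2 := by
  have hz := jap_pos z
  have hnum : jap z ^ 3 * v ≤ jap z ^ (3 - β) := by
    rw [sub_eq_add_neg, rpow_add hz, ← rpow_natCast]
    exact mul_le_mul_of_nonneg_left hv (by positivity)
  rw [div_pow, show (6 : ℝ) - 2 * β = (3 - β) * (2 : ℕ) by push_cast; ring,
    rpow_mul_natCast hz.le]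
  exact div_le_div_of_nonneg_right (pow_le_pow_left₀ (by positivity) hnum 2) (sq_nonneg m)

theorem exists_eLpNorm_jap_cube_mul_div_min_le {β : ℝ} (hβ : 9 / 2 < β) :
    ∃ D : ℝ, 0 ≤ D ∧ ∀ v : E3 → ℝ, Measurable v → (∀ z, 0 ≤ v z) → (∀ z, v z ≤ jap z ^ (-β)) →
      ∀ x : E3, MemLp (fun z => jap z ^ 3 * v z / min (jap x) ‖x - z‖) 2 ∧
        (eLpNorm (fun z => jap z ^ 3 * v z / min (jap x) ‖x - z‖) 2).toReal ≤ √D / jap x := by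
  obtain ⟨D, hD, hL2⟩ := exists_lintegral_jap_rpow_div_min_sq_le (γ := 6 - 2 * β) (by linarith)
  refine ⟨D, hD, fun v hv hv0 hvβ x => ?_⟩
  have hsqrt : √(D / jap x ^ 2) = √D / jap x := by
    rw [sqrt_div' _ (sq_nonneg _), sqrt_sq (jap_pos x).le]
  obtain ⟨hmem, hnorm⟩ := memLp_two_and_eLpNorm_le_of_sq_le (by positivity)
    (Measurable.aestronglyMeasurable (by fun_prop))
    (fun z => sq_jap_pow_three_mul_div_le (hv0 z) (hvβ z) _) (hL2 x)
  exact ⟨hmem, hnorm.trans_eq hsqrt⟩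

theorem stmt19 (β : ℝ) (hβ : 9 / 2 < β) :
    ∃ C : ℝ, ∀ (v : E3 → ℝ), Measurable v → (∀ z : E3, 0 ≤ v z) →
      (∀ z : E3, v z ≤ jap z ^ (-β)) →
      ∀ (K : E3 → E3 → ℂ), Measurable (Function.uncurry K) →
      ∀ M : ℝ, 0 ≤ M →
      (∀ f g : E3 → ℝ, MemLp f 2 volume → MemLp g 2 volume →
        (∀ z, 0 ≤ f z) → (∀ w, 0 ≤ g w) →
        (∫ z : E3, ∫ w : E3, ‖K z w‖ * f z * g w)
          ≤ M * (eLpNorm f 2 volume).toReal * (eLpNorm g 2 volume).toReal) →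
      ∀ x y : E3,
        (∫ z : E3, ∫ w : E3,
            jap z ^ 3 * v z * ‖K z w‖ * v w * jap w ^ 3 /
              (min (jap x) ‖x - z‖ * min (jap y) ‖w - y‖))
          ≤ C * M / (jap x * jap y) := by
  obtain ⟨D, hD, hL2⟩ := exists_eLpNorm_jap_cube_mul_div_min_le hβ
  refine ⟨D, fun v hv hv0 hvβ K _ M hM hbound x y => ?_⟩
  obtain ⟨hfx, hfx_le⟩ := hL2 v hv hv0 hvβ x
  obtain ⟨hfy, hfy_le⟩ := hL2 v hv hv0 hvβ y
  simp only [norm_sub_rev y] at hfy hfy_le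
  have hweight (x z : E3) : 0 ≤ jap z ^ 3 * v z / min (jap x) ‖x - z‖ := by
    have := jap_pos z
    have := jap_pos x
    have := hv0 z
    positivity
  have hx := jap_pos x
  have hy := jap_pos y
  calc _ = ∫ z, ∫ w, ‖K z w‖ * (jap z ^ 3 * v z / min (jap x) ‖x - z‖) *
          (jap w ^ 3 * v w / min (jap y) ‖w - y‖) := by
        congr 1; ext z; congr 1; ext w; ring
    _ ≤ M * (√D / jap x) * (√D / jap y) := by
        refine (hbound _ _ hfx hfy (hweight x) fun w => ?_).trans ?_
        · simpa [norm_sub_rev] using hweight y w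
        · gcongr
    _ = D * M / (jap x * jap y) := by
        rw [mul_assoc, div_mul_div_comm, mul_self_sqrt hD]; ring

end
end
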